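/- arXiv:1208.1237 — 6 statements merged into one kernel-verified Lean document; each statement's English description precedes it below -/
import Mathlib

section
/- Let M = WH ∈ ℝ^{m×n} where W ∈ ℝ^{m×r} has rank r, H = [I_r, H'] with H' ≥ 0 and each column of H' has entries summing to at most 1. Let f : ℝ^m → ℝ≥0 be strongly convex with parameter μ > 0, have L-Lipschitz gradient, and satisfy f(0)=0 with 0 the global minimizer. Then the recursive algorithm that, at each of r steps, selects the column of the current residual maximizing f and projects the residual onto the orthogonal complement of the selected column, recovers a set J of r indices such that M(:,J) = W up to a permutation of columns. -/
/-!
After `j` steps the residual of column `b` is `∑ c, H c b • v_j c`, where `v_j c` is the residual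
of the column `w c` of `W`, because every update is a linear projection. Inductively, the
residuals of the columns of `W` extracted so far vanish, while each remaining `v_j c` is congruent
to `w c` modulo the span of the extracted ones; by linear independence these are nonzero and
pairwise distinct. If the maximizer of `f` is the subconvex combination `∑ θ c • v_j c`, Jensen's
equality case for the strictly convex `f` (with the missing weight on the minimizer `0`) makes
every `v_j c` of positive weight equal to it. So the weight vector `θ` is a unit vector `e_a`, with
`a` not extracted yet, and each step extracts a new column of `W`.
-/

open RealInnerProductSpace Finset Submodule

lemma StrictConvexOn.eq_sum_of_map_le_map_sum {E ι : Type*} [AddCommGroup E] [Module ℝ E]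
    [Fintype ι] {f : E → ℝ} (hf : StrictConvexOn ℝ Set.univ f) {θ : ι → ℝ} {v : ι → E}
    (hθ0 : ∀ c, 0 ≤ θ c) (hθ1 : ∑ c, θ c ≤ 1) (h0 : f 0 ≤ f (∑ c, θ c • v c))
    (hle : ∀ c, f (v c) ≤ f (∑ c, θ c • v c)) {c : ι} (hc : θ c ≠ 0) :
    v c = ∑ c, θ c • v c := by
  set x := ∑ c, θ c • v c
  -- Jensen's equality case, with the missing weight `1 - ∑ θ` placed on the origin.
  let q : Option ι → ℝ := fun o => o.elim (1 - ∑ c, θ c) θ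
  let p : Option ι → E := fun o => o.elim 0 v
  have hq0 : ∀ o ∈ univ, 0 ≤ q o := by
    rintro (_ | c) -
    exacts [sub_nonneg.2 hθ1, hθ0 c]
  have hq1 : ∑ o, q o = 1 := by simp [q, Fintype.sum_option]
  have hpx : ∑ o, q o • p o = x := by simp [q, p, Fintype.sum_option, x]
  have hjensen : f (∑ o, q o • p o) = ∑ o, q o • f (p o) := by
    refine le_antisymm (hf.convexOn.map_sum_le hq0 hq1 (by simp)) ?_
    calc ∑ o, q o • f (p o) ≤ ∑ o, q o • f x := by
          gcongr with o ho
          · exact hq0 o ho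
          · rcases o with _ | c
            exacts [h0, hle c]
      _ = f (∑ o, q o • p o) := by rw [← sum_smul, hq1, one_smul, hpx]
  simpa [p, hpx] using (hf.map_sum_eq_iff' hq0 hq1 (by simp)).1 hjensen (some c) (mem_univ _) hc

section Deflation

variable {E ι : Type*} [NormedAddCommGroup E] [InnerProductSpace ℝ E]
  {w v : ι → E} {S : Finset ι}

-- `v c` is the residual of `w c` once the columns indexed by `S` have been projected out.
def IsDeflation (w : ι → E) (S : Finset ι) (v : ι → E) : Prop :=
  (∀ c ∈ S, v c = 0) ∧ ∀ c, v c - w c ∈ span ℝ (w '' S)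

lemma isDeflation_empty : IsDeflation w ∅ w := by
  simp [IsDeflation]

lemma IsDeflation.ne_zero (hw : LinearIndependent ℝ w) (h : IsDeflation w S v) {c : ι}
    (hc : c ∉ S) : v c ≠ 0 := by
  intro hv
  have hmem := h.2 c
  rw [hv, zero_sub, neg_mem_iff] at hmem
  exact hw.notMem_span_image (by simpa using hc) hmem

lemma IsDeflation.injOn (hw : LinearIndependent ℝ w) (h : IsDeflation w S v) :
    Set.InjOn v (↑S)ᶜ := by
  intro c hc c' hc' hvv
  by_contra hne
  have hdiff : w c - w c' ∈ span ℝ (w '' S) := by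
    simpa [hvv] using sub_mem (h.2 c') (h.2 c)
  refine hw.notMem_span_image (s := insert c' ↑S) (x := c) (by simp_all) ?_
  rw [← sub_add_cancel (w c) (w c')]
  exact add_mem (span_mono (Set.image_mono (Set.subset_insert _ _)) hdiff)
    (subset_span ⟨c', Set.mem_insert _ _, rfl⟩)

lemma IsDeflation.starProjection [DecidableEq ι] (h : IsDeflation w S v) (a : ι) :
    IsDeflation w (insert a S) fun c => (ℝ ∙ v a)ᗮ.starProjection (v c) := by
  have hle : span ℝ (w '' S) ≤ span ℝ (w '' ↑(insert a S)) :=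
    span_mono (by simpa using Set.image_mono (Set.subset_insert _ _))
  have hva : v a ∈ span ℝ (w '' ↑(insert a S)) := by
    rw [← sub_add_cancel (v a) (w a)]
    exact add_mem (hle (h.2 a)) (subset_span ⟨a, by simp, rfl⟩)
  refine ⟨fun c hc => ?_, fun c => ?_⟩
  · rcases mem_insert.1 hc with rfl | hc
    · exact starProjection_orthogonalComplement_singleton_eq_zero _
    · simp [h.1 c hc]
  · simp only [starProjection_orthogonal_val]
    rw [sub_right_comm]
    exact sub_mem (hle (h.2 c))
      ((span_singleton_le_iff_mem _ _).2 hva (starProjection_apply_mem _ _))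

lemma IsDeflation.exists_eq_single [Fintype ι] [DecidableEq ι] {f : E → ℝ}
    (hw : LinearIndependent ℝ w) (h : IsDeflation w S v) (hS : S ≠ univ)
    (hf : StrictConvexOn ℝ Set.univ f) (hmin : ∀ y, f 0 ≤ f y) {θ : ι → ℝ} (hθ0 : ∀ c, 0 ≤ θ c) (hθ1 : ∑ c, θ c ≤ 1)
    (hle : ∀ c, f (v c) ≤ f (∑ c, θ c • v c)) :
    ∃ a ∉ S, θ = Pi.single a 1 := by
  set x := ∑ c, θ c • v c with hx_def
  obtain ⟨c₀, hc₀⟩ : ∃ c, c ∉ S := by simpa [eq_univ_iff_forall] using hS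
  have hx : x ≠ 0 := by
    intro hx0
    refine h.ne_zero hw hc₀ (hf.eq_of_isMinOn (fun y _ => ?_) (fun y _ => hmin y) trivial trivial)
    exact (hle c₀).trans (hx0 ▸ hmin y)
  have hsupp : ∀ c, θ c ≠ 0 → v c = x := fun c hc =>
    hf.eq_sum_of_map_le_map_sum hθ0 hθ1 (hmin _) hle hc
  have hnotS : ∀ c, θ c ≠ 0 → c ∉ S := fun c hc hcS => hx (hsupp c hc ▸ h.1 c hcS)
  obtain ⟨a, ha⟩ : ∃ a, θ a ≠ 0 := by
    by_contra! h0
    exact hx (by simp [x, h0])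
  have huniq : ∀ c, θ c ≠ 0 → c = a := fun c hc =>
    h.injOn hw (hnotS c hc) (hnotS a ha) ((hsupp c hc).trans (hsupp a ha).symm)
  have hθa : θ a = 1 := by
    have hxa : x = θ a • x := by
      conv_lhs => rw [hx_def, sum_eq_single a (fun c _ hca => by
        rw [not_imp_comm.1 (huniq c) hca, zero_smul]) (by simp), hsupp a ha]
    have : (θ a - 1) • x = 0 := by rw [sub_smul, one_smul, ← hxa, sub_self]
    exact sub_eq_zero.1 ((smul_eq_zero.1 this).resolve_right hx)
  refine ⟨a, hnotS a ha, funext fun c => ?_⟩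
  by_cases hca : c = a
  · simp [hca, hθa]
  · simpa [hca] using not_imp_comm.1 (huniq c) hca

end Deflation

section Greedy

variable {E β : Type*} [NormedAddCommGroup E] [InnerProductSpace ℝ E] {r : ℕ}
  {θ : β → Fin r → ℝ} {J : Fin r → β} {w v : Fin r → E} {R : ℕ → β → E} {e : Fin r → β}

lemma residual_eq_sum (P : Fin r → E →L[ℝ] E) (hR0 : ∀ b, R 0 b = ∑ c, θ b c • R 0 (e c))
    (hupd : ∀ j : Fin r, ∀ b, R (j + 1) b = P j (R j b)) :
    ∀ j ≤ r, ∀ b, R j b = ∑ c, θ b c • R j (e c) := by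
  intro j
  induction j with
  | zero => exact fun _ => hR0
  | succ j ih =>
    intro hj b
    simp only [hupd ⟨j, hj⟩]
    rw [ih (by omega) b, map_sum]
    simp only [map_smul]

def IsGreedyState (θ : β → Fin r → ℝ) (J : Fin r → β) (w v : Fin r → E) (j : ℕ)
    (S : Finset (Fin r)) : Prop :=
  S.card = j ∧ IsDeflation w S v ∧ (∀ i : Fin r, (i : ℕ) < j → ∃ a ∈ S, θ (J i) = Pi.single a 1) ∧
    ∀ a ∈ S, ∃ i : Fin r, (i : ℕ) < j ∧ θ (J i) = Pi.single a 1

lemma isGreedyState_zero : IsGreedyState θ J w w 0 ∅ := by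
  simp [IsGreedyState, isDeflation_empty]

lemma IsGreedyState.succ {f : E → ℝ} {j : ℕ} {S : Finset (Fin r)} (hw : LinearIndependent ℝ w)
    (hf : StrictConvexOn ℝ Set.univ f) (hmin : ∀ y, f 0 ≤ f y) (h : IsGreedyState θ J w v j S)
    (i : Fin r) (hij : (i : ℕ) = j) (hθ0 : ∀ c, 0 ≤ θ (J i) c) (hθ1 : ∑ c, θ (J i) c ≤ 1)
    (hle : ∀ c, f (v c) ≤ f (∑ c, θ (J i) c • v c)) :
    ∃ a, θ (J i) = Pi.single a 1 ∧
      IsGreedyState θ J w (fun c => (ℝ ∙ v a)ᗮ.starProjection (v c)) (j + 1) (insert a S) := by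
  obtain ⟨hcard, hdefl, hsel, hcov⟩ := h
  have hS : S ≠ univ := fun hS => by
    have := i.2
    rw [hij, ← hcard, hS, card_univ, Fintype.card_fin] at this
    exact lt_irrefl _ this
  obtain ⟨a, haS, ha⟩ := hdefl.exists_eq_single hw hS hf hmin hθ0 hθ1 hle
  refine ⟨a, ha, by rw [card_insert_of_notMem haS, hcard], hdefl.starProjection a,
    fun i' hi' => ?_, fun a' ha' => ?_⟩
  · rcases (Nat.lt_succ_iff_lt_or_eq.1 hi') with hi' | hi'
    · obtain ⟨b, hb, hb'⟩ := hsel i' hi'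
      exact ⟨b, mem_insert_of_mem hb, hb'⟩
    · exact ⟨a, mem_insert_self a S, by rwa [Fin.ext (hi'.trans hij.symm)]⟩
  · rcases mem_insert.1 ha' with rfl | ha'
    · exact ⟨i, by omega, ha⟩
    · obtain ⟨i', hi', hi''⟩ := hcov a' ha'
      exact ⟨i', by omega, hi''⟩

theorem exists_perm_greedy_selection {f : E → ℝ} (hw : LinearIndependent ℝ w)
    (hf : StrictConvexOn ℝ Set.univ f) (hmin : ∀ y, f 0 ≤ f y)
    (hθ : ∀ b, (∀ c, 0 ≤ θ b c) ∧ ∑ c, θ b c ≤ 1) (he : ∀ c, θ (e c) = Pi.single c 1)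
    (hR0 : ∀ b, R 0 b = ∑ c, θ b c • w c)
    (hupd : ∀ j : Fin r, ∀ b, R (j + 1) b = (ℝ ∙ R j (J j))ᗮ.starProjection (R j b))
    (hmax : ∀ j : Fin r, ∀ b, f (R j b) ≤ f (R j (J j))) :
    ∃ σ : Equiv.Perm (Fin r), ∀ i, θ (J i) = Pi.single (σ i) 1 := by
  have hRe : ∀ c, R 0 (e c) = w c := fun c => by simp [hR0, he]
  have hrep := residual_eq_sum (θ := θ) (e := e) _ (fun b => by simp only [hRe, hR0]) hupd
  have hstate : ∀ j ≤ r, ∃ S, IsGreedyState θ J w (fun c => R j (e c)) j S := by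
    intro j
    induction j with
    | zero => exact fun _ => ⟨∅, by simpa only [hRe] using isGreedyState_zero⟩
    | succ j ih =>
      intro (hj : j < r)
      obtain ⟨S, hS⟩ := ih hj.le
      obtain ⟨a, ha, hS'⟩ := hS.succ hw hf hmin ⟨j, hj⟩ rfl (hθ _).1 (hθ _).2
        fun c => (hrep j hj.le _) ▸ hmax ⟨j, hj⟩ (e c)
      have hu : R j (J ⟨j, hj⟩) = R j (e a) := by simp [hrep j hj.le (J _), ha]
      refine ⟨insert a S, ?_⟩
      convert hS' using 2 with c
      rw [hupd ⟨j, hj⟩, hu]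
  obtain ⟨S, hcard, -, hsel, hcov⟩ := hstate r le_rfl
  have hS : S = univ := eq_univ_of_card S (by simp [hcard])
  choose g hg using fun i : Fin r => (hsel i i.2).imp fun _ h => h.2
  have hg_surj : Function.Surjective g := fun a => by
    obtain ⟨i, -, hi⟩ := hcov a (hS ▸ mem_univ a)
    exact ⟨i, by simpa [Pi.single_apply] using congrFun ((hg i).symm.trans hi) (g i)⟩
  exact ⟨Equiv.ofBijective g hg_surj.bijective_of_finite, hg⟩

end Greedy

lemma starProjection_orthogonal_singleton_apply {E : Type*} [NormedAddCommGroup E]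
    [InnerProductSpace ℝ E] (u x : E) :
    (ℝ ∙ u)ᗮ.starProjection x = x - (⟪u, x⟫ / ‖u‖ ^ 2) • u := by
  rw [starProjection_orthogonal_val, starProjection_singleton]
  rfl

theorem stmt_2_general (m r n' : ℕ) (μ : ℝ) (hμ : 0 < μ)
    (w : Fin r → EuclideanSpace ℝ (Fin m))
    (hW : LinearIndependent ℝ w)
    (H : Matrix (Fin r) (Fin (r + n')) ℝ)
    (hHI : ∀ j : Fin r, ∀ a : Fin r, H a (Fin.castAdd n' j) = if a = j then 1 else 0)
    (hH0 : ∀ a : Fin r, ∀ j : Fin n', 0 ≤ H a (Fin.natAdd r j))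
    (hH1 : ∀ j : Fin n', ∑ a, H a (Fin.natAdd r j) ≤ 1)
    (Mc : Fin (r + n') → EuclideanSpace ℝ (Fin m))
    (hM : ∀ j, Mc j = ∑ a, H a j • w a)
    (f : EuclideanSpace ℝ (Fin m) → ℝ)
    (hf0 : f 0 = 0) (hnonneg : ∀ y, 0 ≤ f y)
    (hsc : ∀ x y : EuclideanSpace ℝ (Fin m), ∀ δ : ℝ, 0 ≤ δ → δ ≤ 1 →
      f (δ • x + (1 - δ) • y) ≤ δ * f x + (1 - δ) * f y - μ / 2 * (δ * (1 - δ)) * ‖x - y‖ ^ 2)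
    (R : ℕ → Fin (r + n') → EuclideanSpace ℝ (Fin m))
    (J : Fin r → Fin (r + n'))
    (hR0 : R 0 = Mc)
    (hmax : ∀ j : Fin r, ∀ b, f (R (j : ℕ) b) ≤ f (R (j : ℕ) (J j)))
    (hupd : ∀ j : Fin r, ∀ b, R ((j : ℕ) + 1) b =
      R (j : ℕ) b - ((inner ℝ (R (j : ℕ) (J j)) (R (j : ℕ) b) : ℝ) / ‖R (j : ℕ) (J j)‖ ^ 2) •
        R (j : ℕ) (J j)) :
    ∃ σ : Equiv.Perm (Fin r), ∀ j : Fin r, Mc (J j) = w (σ j) := by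
  have hstrong : StrongConvexOn Set.univ μ f := by
    refine ⟨convex_univ, fun x _ y _ a b ha _ hab => ?_⟩
    obtain rfl : b = 1 - a := by linarith
    have := hsc x y a ha (by linarith)
    simp only [smul_eq_mul]
    linarith
  have hcol : ∀ b, (∀ c, 0 ≤ H c b) ∧ ∑ c, H c b ≤ 1 := by
    refine Fin.addCases (fun j => ⟨fun c => ?_, ?_⟩) (fun j => ⟨fun c => hH0 c j, hH1 j⟩) <;>
      simp [hHI]
    split_ifs <;> norm_num
  obtain ⟨σ, hσ⟩ := exists_perm_greedy_selection (θ := fun b c => H c b) (e := Fin.castAdd n') hW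
    (hstrong.strictConvexOn hμ) (by simpa [hf0] using hnonneg) hcol
    (fun c => funext fun a => by simp [hHI, Pi.single_apply]) (by simpa [hR0] using hM)
    (fun j b => by rw [hupd, starProjection_orthogonal_singleton_apply]) hmax
  refine ⟨σ, fun j => ?_⟩
  simp [hM, fun a => congrFun (hσ j) a]

/-- noiseless recovery by the recursive algorithm.  `M = W[I_r, H']` is separable
(`W` of full column rank, columns of `H'` in the unit simplex), `f` is strongly convex with
`L`-Lipschitz gradient, `f 0 = 0` with `0` the global minimizer.  The algorithm selects at each
step the column of the residual maximizing `f` and projects onto its orthogonal complement;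
after `r` steps the selected columns of `M` are exactly the columns of `W` up to permutation. -/
theorem stmt_2 (m r n' : ℕ) (hr : 0 < r) (μ L : ℝ) (hμ : 0 < μ)
    (w : Fin r → EuclideanSpace ℝ (Fin m))
    (hW : LinearIndependent ℝ w)
    (H : Matrix (Fin r) (Fin (r + n')) ℝ)
    (hHI : ∀ j : Fin r, ∀ a : Fin r, H a (Fin.castAdd n' j) = if a = j then 1 else 0)
    (hH0 : ∀ a : Fin r, ∀ j : Fin n', 0 ≤ H a (Fin.natAdd r j))
    (hH1 : ∀ j : Fin n', ∑ a, H a (Fin.natAdd r j) ≤ 1)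
    (Mc : Fin (r + n') → EuclideanSpace ℝ (Fin m))
    (hM : ∀ j, Mc j = ∑ a, H a j • w a)
    (f : EuclideanSpace ℝ (Fin m) → ℝ)
    (f' : EuclideanSpace ℝ (Fin m) → EuclideanSpace ℝ (Fin m))
    (hf0 : f 0 = 0) (hnonneg : ∀ y, 0 ≤ f y)
    (hgrad : ∀ x, HasGradientAt f (f' x) x)
    (hlip : ∀ x y, ‖f' x - f' y‖ ≤ L * ‖x - y‖)
    (hsc : ∀ x y : EuclideanSpace ℝ (Fin m), ∀ δ : ℝ, 0 ≤ δ → δ ≤ 1 →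
      f (δ • x + (1 - δ) • y) ≤ δ * f x + (1 - δ) * f y - μ / 2 * (δ * (1 - δ)) * ‖x - y‖ ^ 2)
    (R : ℕ → Fin (r + n') → EuclideanSpace ℝ (Fin m))
    (J : Fin r → Fin (r + n'))
    (hR0 : R 0 = Mc)
    (hmax : ∀ j : Fin r, ∀ b, f (R (j : ℕ) b) ≤ f (R (j : ℕ) (J j)))
    (hupd : ∀ j : Fin r, ∀ b, R ((j : ℕ) + 1) b =
      R (j : ℕ) b - ((inner ℝ (R (j : ℕ) (J j)) (R (j : ℕ) b) : ℝ) / ‖R (j : ℕ) (J j)‖ ^ 2) •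
        R (j : ℕ) (J j)) :
    ∃ σ : Equiv.Perm (Fin r), ∀ j : Fin r, Mc (J j) = w (σ j) :=
  stmt_2_general m r n' μ hμ w hW H hHI hH0 hH1 Mc hM f hf0 hnonneg hsc R J hR0 hmax hupd
end

section
/- Let Y = [W, Q] with W ∈ ℝ^{m×k}, Q ∈ ℝ^{m×(r−k)}, and let f satisfy strong convexity with parameter μ, L-Lipschitz gradient, f(0)=0 with 0 the minimizer. Define ν(W) = minᵢ ‖wᵢ‖₂, γ(W) = min_{i≠j} ‖wᵢ−w_j‖₂, ω(W) = min(ν(W), γ(W)/√2), K(Q) = maxᵢ ‖qᵢ‖₂. If ν(W) > 2√(L/μ)·K(Q), then for any 0 ≤ δ ≤ 1/2, the maximum f* of f(Yx) over x ∈ Δ^r with xᵢ ≤ 1−δ for 1 ≤ i ≤ k satisfies f* ≤ maxᵢ f(wᵢ) − (1/2)μ(1−δ)δ·ω(W)². -/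
/-!
Write `Yx = ∑ aᵢ wᵢ + ∑ bⱼ qⱼ` as a convex combination of the columns and of `0` (which gets the
remaining weight `1 - ∑ x`). Since `f - μ/2 ‖·‖²` is convex, Jensen's inequality bounds `f (Yx)` by
the weighted mean of the values of `f`, minus `μ/2` times the weighted variance of the points; the
variance is half the weighted sum of the pairwise squared distances. Two columns of `W` are at
distance at least `γ ≥ √2 ω`, and a column of `W` is at distance at least `ν/2` from `0` and from
every column of `Q`, because `K ≤ ν/2`. On the values side, `μ/2 ‖y‖² ≤ f y ≤ L/2 ‖y‖²` gives
`f (qⱼ) ≤ L K²/2 ≤ μ ν²/8` and `max f (wᵢ) ≥ μ ν²/2`. The cap `aᵢ ≤ 1 - δ` gives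
`∑ aᵢ² ≤ (1 - δ) ∑ aᵢ`, and what is left is a quadratic inequality in `∑ aᵢ`, `∑ bⱼ` and `δ`.
-/

open Filter Topology Finset Set

theorem two_mul_le_and_four_mul_mul_sq_le_of_two_mul_sqrt_mul_lt {μ L K ν : ℝ} (hμ : 0 < μ)
    (hμL : μ ≤ L) (hK : 0 ≤ K) (hsep : 2 * Real.sqrt (L / μ) * K < ν) :
    2 * K ≤ ν ∧ 4 * (L * K ^ 2) ≤ μ * ν ^ 2 := by
  have hone : 1 ≤ Real.sqrt (L / μ) := Real.one_le_sqrt.2 ((one_le_div hμ).2 hμL)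
  refine ⟨by nlinarith, ?_⟩
  have hsq : (2 * Real.sqrt (L / μ) * K) ^ 2 ≤ ν ^ 2 := pow_le_pow_left₀ (by positivity) hsep.le 2
  rw [mul_pow, mul_pow, Real.sq_sqrt (div_nonneg (hμ.le.trans hμL) hμ.le)] at hsq
  have := mul_le_mul_of_nonneg_left hsq hμ.le
  field_simp at this ⊢
  linarith

section Norm

variable {E : Type*} [SeminormedAddCommGroup E] {ι : Type*} [Fintype ι]

theorem sq_sum_sub_sum_sq_mul_le_sum_sum {c : ι → ℝ} (hc : ∀ i, 0 ≤ c i) {z : ι → E} {d : ℝ}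
    (hz : ∀ i j, i ≠ j → d ≤ ‖z i - z j‖ ^ 2) :
    ((∑ i, c i) ^ 2 - ∑ i, c i ^ 2) * d ≤ ∑ i, ∑ j, c i * c j * ‖z i - z j‖ ^ 2 := by
  classical
  have hpair : ∀ i j, c i * c j * d - (if i = j then c i * c j * d else 0)
      ≤ c i * c j * ‖z i - z j‖ ^ 2 := by
    intro i j
    split_ifs with h
    · simp [h]
    · rw [sub_zero]; exact mul_le_mul_of_nonneg_left (hz i j h) (mul_nonneg (hc i) (hc j))
  calc ((∑ i, c i) ^ 2 - ∑ i, c i ^ 2) * d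
      = ∑ i, ∑ j, (c i * c j * d - (if i = j then c i * c j * d else 0)) := by
        rw [sq, sum_mul_sum]
        simp only [sum_sub_distrib, sum_ite_eq, Finset.mem_univ, if_true, sub_mul, sum_mul, sq]
    _ ≤ _ := sum_le_sum fun i _ => sum_le_sum fun j _ => hpair i j

end Norm

section NormedSpace

variable {E : Type*} [NormedAddCommGroup E] [NormedSpace ℝ E]

theorem strongConvexOn_univ_of_forall {f : E → ℝ} {μ : ℝ}
    (h : ∀ x y : E, ∀ t : ℝ, 0 ≤ t → t ≤ 1 →
      f (t • x + (1 - t) • y) ≤ t * f x + (1 - t) * f y - μ / 2 * (t * (1 - t)) * ‖x - y‖ ^ 2) :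
    StrongConvexOn univ μ f := by
  refine ⟨convex_univ, fun x _ y _ s t hs ht hst => ?_⟩
  obtain rfl : t = 1 - s := by linarith
  simpa [mul_assoc, mul_comm, mul_left_comm] using h x y s hs (by linarith)

theorem StrongConvexOn.add_mul_norm_sub_sq_le_of_isMinOn {s : Set E} {μ : ℝ} {f : E → ℝ}
    (hf : StrongConvexOn s μ f) {x₀ : E} (hmin : IsMinOn f s x₀) (hx₀ : x₀ ∈ s) {y : E}
    (hy : y ∈ s) : f x₀ + μ / 2 * ‖y - x₀‖ ^ 2 ≤ f y := by
  have hle : ∀ t ∈ Ioo (0 : ℝ) 1, f x₀ + μ / 2 * (1 - t) * ‖y - x₀‖ ^ 2 ≤ f y := by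
    intro t ht
    have h := hf.2 hy hx₀ ht.1.le (sub_nonneg.2 ht.2.le) (add_sub_cancel t 1)
    have hmin' := isMinOn_iff.1 hmin _
      (hf.1 hy hx₀ ht.1.le (sub_nonneg.2 ht.2.le) (add_sub_cancel t 1))
    simp only [smul_eq_mul] at h
    nlinarith [ht.1]
  have hlim : Tendsto (fun t : ℝ => f x₀ + μ / 2 * (1 - t) * ‖y - x₀‖ ^ 2) (𝓝[>] 0)
      (𝓝 (f x₀ + μ / 2 * (1 - 0) * ‖y - x₀‖ ^ 2)) :=
    ((Continuous.tendsto (by fun_prop) 0).mono_left nhdsWithin_le_nhds)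
  rw [sub_zero, mul_one] at hlim
  exact le_of_tendsto hlim (eventually_of_mem (Ioo_mem_nhdsGT zero_lt_one) hle)

end NormedSpace

section InnerProductSpace

variable {E : Type*} [NormedAddCommGroup E] [InnerProductSpace ℝ E]

theorem sum_sum_mul_mul_norm_sub_sq {ι : Type*} [Fintype ι] (c : ι → ℝ) (z : ι → E) :
    ∑ i, ∑ j, c i * c j * ‖z i - z j‖ ^ 2
      = 2 * ((∑ i, c i) * ∑ i, c i * ‖z i‖ ^ 2 - ‖∑ i, c i • z i‖ ^ 2) := by
  have hsq : ‖∑ i, c i • z i‖ ^ 2 = ∑ i, ∑ j, c i * c j * inner ℝ (z i) (z j) := by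
    simp only [← real_inner_self_eq_norm_sq, sum_inner, inner_sum, real_inner_smul_left,
      real_inner_smul_right]
    exact sum_congr rfl fun i _ => sum_congr rfl fun j _ => by rw [real_inner_comm]; ring
  simp only [hsq, norm_sub_sq_real, mul_add, mul_sub, sum_add_distrib, sum_sub_distrib, sum_mul,
    mul_sum]
  rw [sum_comm (f := fun i j => c i * c j * ‖z j‖ ^ 2)]
  simp only [← sum_sub_distrib, ← sum_add_distrib]
  exact sum_congr rfl fun i _ => sum_congr rfl fun j _ => by ring

-- For total weight `∑ c ≤ 1` with the remaining mass `1 - ∑ c` at `0`, this is the variance.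
def weightedVariance {ι : Type*} [Fintype ι] (c : ι → ℝ) (z : ι → E) : ℝ :=
  ∑ i, c i * ‖z i‖ ^ 2 - ‖∑ i, c i • z i‖ ^ 2

theorem StrongConvexOn.map_sum_le_of_sum_le_one {ι : Type*} [Fintype ι] {s : Set E} {μ : ℝ}
    {f : E → ℝ} (hf : StrongConvexOn s μ f) (h0 : (0 : E) ∈ s) {c : ι → ℝ} (hc : ∀ i, 0 ≤ c i)
    (hc1 : ∑ i, c i ≤ 1) {z : ι → E} (hz : ∀ i, z i ∈ s) :
    f (∑ i, c i • z i) ≤ (1 - ∑ i, c i) * f 0 + ∑ i, c i * f (z i)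
      - μ / 2 * weightedVariance c z := by
  have h := (strongConvexOn_iff_convex.1 hf).map_add_sum_le (t := univ) (w := c) (p := z)
    (fun i _ => hc i) (by ring) (fun i _ => hz i) (sub_nonneg.2 hc1) h0
  simp only [smul_zero, zero_add, smul_eq_mul, norm_zero, mul_sub, sum_sub_distrib] at h
  have hsum : ∑ i, c i * (μ / 2 * ‖z i‖ ^ 2) = μ / 2 * ∑ i, c i * ‖z i‖ ^ 2 := by
    rw [mul_sum]; exact sum_congr rfl fun i _ => by ring
  rw [weightedVariance]
  linarith

theorem le_weightedVariance_append {k k' : ℕ} {a : Fin k → ℝ} {b : Fin k' → ℝ}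
    (ha : ∀ i, 0 ≤ a i) (hb : ∀ j, 0 ≤ b j) (hab : ∑ i, a i + ∑ j, b j ≤ 1)
    {w : Fin k → E} {q : Fin k' → E}
    {dw dww dwq : ℝ} (hw : ∀ i, dw ≤ ‖w i‖ ^ 2) (hww : ∀ i j, i ≠ j → dww ≤ ‖w i - w j‖ ^ 2)
    (hwq : ∀ i j, dwq ≤ ‖w i - q j‖ ^ 2) :
    ((∑ i, a i) ^ 2 - ∑ i, a i ^ 2) * dww / 2 + (∑ i, a i) * (∑ j, b j) * dwq
        + (1 - ∑ i, a i - ∑ j, b j) * (∑ i, a i) * dw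
      ≤ weightedVariance (Fin.append a b) (Fin.append w q) := by
  have hid := sum_sum_mul_mul_norm_sub_sq (Fin.append a b) (Fin.append w q)
  simp only [weightedVariance, Fin.sum_univ_add, Fin.append_left, Fin.append_right,
    sum_add_distrib] at hid ⊢
  have hwwb := sq_sum_sub_sum_sq_mul_le_sum_sum ha hww
  have hwqb : (∑ i, a i) * (∑ j, b j) * dwq ≤ ∑ i, ∑ j, a i * b j * ‖w i - q j‖ ^ 2 := by
    rw [sum_mul_sum, sum_mul]
    exact sum_le_sum fun i _ => by
      rw [sum_mul]
      exact sum_le_sum fun j _ => mul_le_mul_of_nonneg_left (hwq i j) (mul_nonneg (ha i) (hb j))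
  have hqwb : ∑ j, ∑ i, b j * a i * ‖q j - w i‖ ^ 2 = ∑ i, ∑ j, a i * b j * ‖w i - q j‖ ^ 2 := by
    rw [sum_comm]
    exact sum_congr rfl fun i _ => sum_congr rfl fun j _ => by rw [norm_sub_rev]; ring
  have hqqb : 0 ≤ ∑ j, ∑ j', b j * b j' * ‖q j - q j'‖ ^ 2 :=
    sum_nonneg fun j _ => sum_nonneg fun j' _ => by have := hb j; have := hb j'; positivity
  have hwb : (∑ i, a i) * dw ≤ ∑ i, a i * ‖w i‖ ^ 2 := by
    rw [sum_mul]; exact sum_le_sum fun i _ => mul_le_mul_of_nonneg_left (hw i) (ha i)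
  have hqb : 0 ≤ ∑ j, b j * ‖q j‖ ^ 2 := sum_nonneg fun j _ => by have := hb j; positivity
  linarith [mul_le_mul_of_nonneg_left hwb (sub_nonneg.2 hab), mul_nonneg (sub_nonneg.2 hab) hqb]

theorem StrongConvexOn.apply_sum_smul_add_sum_smul_le {k k' : ℕ} {f : E → ℝ} {μ M ν ω δ : ℝ}
    (hf : StrongConvexOn univ μ f) (hμ : 0 ≤ μ) (hf0 : f 0 = 0) {a : Fin k → ℝ}
    {b : Fin k' → ℝ} (ha : ∀ i, 0 ≤ a i) (hb : ∀ j, 0 ≤ b j) (hab : ∑ i, a i + ∑ j, b j ≤ 1)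
    (haδ : ∀ i, a i ≤ 1 - δ) {w : Fin k → E} {q : Fin k' → E} (hw : ∀ i, ν ^ 2 ≤ ‖w i‖ ^ 2)
    (hww : ∀ i j, i ≠ j → 2 * ω ^ 2 ≤ ‖w i - w j‖ ^ 2) (hwq : ∀ i j, ν ^ 2 / 4 ≤ ‖w i - q j‖ ^ 2)
    (hων : ω ^ 2 ≤ ν ^ 2) (hfw : ∀ i, f (w i) ≤ M) (hM : μ / 2 * ν ^ 2 ≤ M)
    (hfq : ∀ j, f (q j) ≤ μ / 8 * ν ^ 2) :
    f (∑ i, a i • w i + ∑ j, b j • q j) ≤ M - 1 / 2 * μ * (1 - δ) * δ * ω ^ 2 := by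
  have hjensen := hf.map_sum_le_of_sum_le_one (mem_univ 0) (c := Fin.append a b)
    (z := Fin.append w q) ((Fin.forall_fin_add _).2 ⟨by simpa using ha, by simpa using hb⟩)
    (by simpa [Fin.sum_univ_add] using hab) (fun _ => mem_univ _)
  have hvar := mul_le_mul_of_nonneg_left (le_weightedVariance_append ha hb hab hw hww hwq)
    (by positivity : (0 : ℝ) ≤ μ / 2)
  simp only [weightedVariance, Fin.sum_univ_add, Fin.append_left, Fin.append_right, hf0,
    mul_zero, zero_add] at hjensen hvar
  set s := ∑ i, a i
  set t := ∑ j, b j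
  set σ := ∑ i, a i ^ 2
  have hσ : σ ≤ (1 - δ) * s := by
    rw [mul_sum]; exact sum_le_sum fun i _ => by nlinarith [ha i, haδ i]
  have hfa : ∑ i, a i * f (w i) ≤ s * M := by
    rw [sum_mul]; exact sum_le_sum fun i _ => mul_le_mul_of_nonneg_left (hfw i) (ha i)
  have hfb : ∑ j, b j * f (q j) ≤ t * (μ / 8 * ν ^ 2) := by
    rw [sum_mul]; exact sum_le_sum fun j _ => mul_le_mul_of_nonneg_left (hfq j) (hb j)
  have hs : 0 ≤ s := sum_nonneg fun i _ => ha i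
  have ht : 0 ≤ t := sum_nonneg fun j _ => hb j
  -- with `u = 1 - s`, the difference of the two sides is at least `((3u - 2δ)² + 8δ²) / 12`
  have hpoly : (1 - δ) * δ ≤ (1 - s - t) * (1 + s) + 3 / 4 * t + s * t / 4 + (s ^ 2 - σ) := by
    nlinarith [sq_nonneg (3 * (1 - s) - 2 * δ), sq_nonneg δ,
      mul_nonneg (sub_nonneg.2 hab) (by linarith : 0 ≤ 1 + 3 * s)]
  calc f (∑ i, a i • w i + ∑ j, b j • q j)
      ≤ s * M + t * (μ / 8 * ν ^ 2)
          - μ / 2 * ((s ^ 2 - σ) * ω ^ 2 + s * t * (ν ^ 2 / 4) + (1 - s - t) * s * ν ^ 2) := by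
        linarith
    _ ≤ M - μ / 2 * (((1 - s - t) * (1 + s) + 3 / 4 * t + s * t / 4) * ν ^ 2
          + (s ^ 2 - σ) * ω ^ 2) := by
        linarith [mul_le_mul_of_nonneg_left hM (by linarith : 0 ≤ 1 - s)]
    _ ≤ M - μ / 2 * (((1 - s - t) * (1 + s) + 3 / 4 * t + s * t / 4) * ω ^ 2
          + (s ^ 2 - σ) * ω ^ 2) := by
        have : 0 ≤ 1 - s - t := by linarith
        gcongr
    _ ≤ M - 1 / 2 * μ * (1 - δ) * δ * ω ^ 2 := by
        linarith [mul_le_mul_of_nonneg_right hpoly (mul_nonneg hμ (sq_nonneg ω))]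

theorem StrongConvexOn.apply_sum_smul_add_sum_smul_le_iSup {k k' : ℕ} [Nonempty (Fin k)]
    {f : E → ℝ} {μ L ν ω K δ : ℝ} (hf : StrongConvexOn univ μ f) (hμ : 0 < μ) (hf0 : f 0 = 0)
    (hlow : ∀ y, μ / 2 * ‖y‖ ^ 2 ≤ f y) (hupp : ∀ y, f y ≤ L / 2 * ‖y‖ ^ 2)
    {w : Fin k → E} {q : Fin k' → E} (hw : ∀ i, ν ≤ ‖w i‖)
    (hww : ∀ i j, i ≠ j → Real.sqrt 2 * ω ≤ ‖w i - w j‖) (hω0 : 0 ≤ ω) (hων : ω ≤ ν)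
    (hq : ∀ j, ‖q j‖ ≤ K) (hK0 : 0 ≤ K) (hsep : 2 * Real.sqrt (L / μ) * K < ν)
    {a : Fin k → ℝ} {b : Fin k' → ℝ} (ha : ∀ i, 0 ≤ a i) (hb : ∀ j, 0 ≤ b j)
    (hab : ∑ i, a i + ∑ j, b j ≤ 1) (haδ : ∀ i, a i ≤ 1 - δ) :
    f (∑ i, a i • w i + ∑ j, b j • q j) ≤ (⨆ i, f (w i)) - 1 / 2 * μ * (1 - δ) * δ * ω ^ 2 := by
  obtain ⟨i₀⟩ := ‹Nonempty (Fin k)›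
  have hν : 0 < ν := (by positivity : 0 ≤ 2 * Real.sqrt (L / μ) * K).trans_lt hsep
  have hμL : μ ≤ L := by
    nlinarith [hlow (w i₀), hupp (w i₀), pow_pos (hν.trans_le (hw i₀)) 2]
  obtain ⟨hKν, hLK⟩ := two_mul_le_and_four_mul_mul_sq_le_of_two_mul_sqrt_mul_lt hμ hμL hK0 hsep
  have hfw (i) : f (w i) ≤ ⨆ i, f (w i) := le_ciSup (Finite.bddAbove_range fun i => f (w i)) i
  refine hf.apply_sum_smul_add_sum_smul_le hμ.le hf0 ha hb hab haδ
    (fun i => pow_le_pow_left₀ hν.le (hw i) 2) (fun i j hij => ?_) (fun i j => ?_)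
    (pow_le_pow_left₀ hω0 hων 2) hfw ?_ (fun j => ?_)
  · calc 2 * ω ^ 2 = (Real.sqrt 2 * ω) ^ 2 := by rw [mul_pow, Real.sq_sqrt zero_le_two]
      _ ≤ ‖w i - w j‖ ^ 2 := pow_le_pow_left₀ (by positivity) (hww i j hij) 2
  · calc ν ^ 2 / 4 = (ν / 2) ^ 2 := by ring
      _ ≤ ‖w i - q j‖ ^ 2 := pow_le_pow_left₀ (by positivity)
          (by linarith [norm_sub_norm_le (w i) (q j), hw i, hq j]) 2
  · calc μ / 2 * ν ^ 2 ≤ μ / 2 * ‖w i₀‖ ^ 2 := by gcongr; exact hw i₀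
      _ ≤ ⨆ i, f (w i) := (hlow _).trans (hfw i₀)
  · calc f (q j) ≤ L / 2 * ‖q j‖ ^ 2 := hupp _
      _ ≤ L / 2 * K ^ 2 := by gcongr; exacts [by linarith, hq j]
      _ ≤ μ / 8 * ν ^ 2 := by linarith

variable [CompleteSpace E]

theorem le_add_inner_add_of_lipschitz_gradient {f : E → ℝ} {f' : E → E} {L : ℝ}
    (hgrad : ∀ x, HasGradientAt f (f' x) x) (hlip : ∀ x y, ‖f' x - f' y‖ ≤ L * ‖x - y‖)
    (x y : E) : f y ≤ f x + inner ℝ (f' x) (y - x) + L / 2 * ‖y - x‖ ^ 2 := by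
  set ψ : ℝ → ℝ := fun t =>
    f (x + t • (y - x)) - t * inner ℝ (f' x) (y - x) - L / 2 * t ^ 2 * ‖y - x‖ ^ 2
  have hψ : ∀ t, HasDerivAt ψ
      (inner ℝ (f' (x + t • (y - x)) - f' x) (y - x) - L * t * ‖y - x‖ ^ 2) t := by
    intro t
    have hline : HasDerivAt (fun t : ℝ => x + t • (y - x)) (y - x) t := by
      simpa using ((hasDerivAt_id t).smul_const (y - x)).const_add x
    have hf := (hgrad (x + t • (y - x))).hasFDerivAt.comp_hasDerivAt t hline
    simp only [InnerProductSpace.toDual_apply_apply] at hf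
    refine ((hf.sub ((hasDerivAt_id t).mul_const (inner ℝ (f' x) (y - x)))).sub
      (((hasDerivAt_pow 2 t).const_mul (L / 2)).mul_const (‖y - x‖ ^ 2))).congr_deriv ?_
    rw [inner_sub_left]
    push_cast
    ring
  have hanti : AntitoneOn ψ (Icc 0 1) := by
    refine antitoneOn_of_hasDerivWithinAt_nonpos (convex_Icc 0 1)
      (fun t _ => (hψ t).continuousAt.continuousWithinAt) (fun t _ => (hψ t).hasDerivWithinAt) ?_
    intro t ht
    rw [interior_Icc] at ht
    have hlip_t : ‖f' (x + t • (y - x)) - f' x‖ ≤ L * t * ‖y - x‖ := by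
      simpa [norm_smul, abs_of_pos ht.1, mul_assoc] using hlip (x + t • (y - x)) x
    have := real_inner_le_norm (f' (x + t • (y - x)) - f' x) (y - x)
    nlinarith [mul_le_mul_of_nonneg_right hlip_t (norm_nonneg (y - x))]
  have := hanti (left_mem_Icc.2 zero_le_one) (right_mem_Icc.2 zero_le_one) zero_le_one
  simp only [ψ, zero_smul, add_zero, one_smul, add_sub_cancel] at this
  linarith

theorem IsMinOn.le_add_mul_norm_sub_sq_of_lipschitz_gradient {f : E → ℝ} {f' : E → E} {L : ℝ}
    {x₀ : E} (hmin : IsMinOn f univ x₀) (hgrad : ∀ x, HasGradientAt f (f' x) x)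
    (hlip : ∀ x y, ‖f' x - f' y‖ ≤ L * ‖x - y‖) (y : E) :
    f y ≤ f x₀ + L / 2 * ‖y - x₀‖ ^ 2 := by
  have hgrad₀ : f' x₀ = 0 := by
    simpa using (hmin.isLocalMin univ_mem).hasFDerivAt_eq_zero (hgrad x₀).hasFDerivAt
  simpa [hgrad₀] using le_add_inner_add_of_lipschitz_gradient hgrad hlip x₀ y

end InnerProductSpace

theorem stmt_3_general (m k k' : ℕ) (μ L : ℝ) (hμ : 0 < μ)
    (w : Fin k → EuclideanSpace ℝ (Fin m)) (q : Fin k' → EuclideanSpace ℝ (Fin m))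
    (f : EuclideanSpace ℝ (Fin m) → ℝ)
    (f' : EuclideanSpace ℝ (Fin m) → EuclideanSpace ℝ (Fin m))
    (hf0 : f 0 = 0) (hmin : ∀ y, f 0 ≤ f y)
    (hgrad : ∀ x, HasGradientAt f (f' x) x)
    (hlip : ∀ x y, ‖f' x - f' y‖ ≤ L * ‖x - y‖)
    (hsc : ∀ x y : EuclideanSpace ℝ (Fin m), ∀ δ : ℝ, 0 ≤ δ → δ ≤ 1 →
      f (δ • x + (1 - δ) • y) ≤ δ * f x + (1 - δ) * f y - μ / 2 * (δ * (1 - δ)) * ‖x - y‖ ^ 2)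
    (ν γ ω K : ℝ)
    (hν : ν = ⨅ i : Fin k, ‖w i‖)
    (hγ : γ = ⨅ p : {p : Fin k × Fin k // p.1 ≠ p.2}, ‖w p.1.1 - w p.1.2‖)
    (hω : ω = min ν (γ / Real.sqrt 2))
    (hK : K = ⨆ i : Fin k', ‖q i‖)
    (hsep : 2 * Real.sqrt (L / μ) * K < ν)
    (δ : ℝ)
    (x : Fin (k + k') → ℝ) (hx0 : ∀ i, 0 ≤ x i) (hx1 : ∑ i, x i ≤ 1)
    (hxb : ∀ i : Fin k, x (Fin.castAdd k' i) ≤ 1 - δ) :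
    f (∑ i : Fin k, x (Fin.castAdd k' i) • w i + ∑ i : Fin k', x (Fin.natAdd k i) • q i)
      ≤ (⨆ i : Fin k, f (w i)) - 1 / 2 * μ * (1 - δ) * δ * ω ^ 2 := by
  have hK0 : 0 ≤ K := hK ▸ Real.iSup_nonneg fun j => norm_nonneg _
  have hγ0 : 0 ≤ γ := hγ ▸ Real.iInf_nonneg fun p => norm_nonneg _
  have hνpos : 0 < ν := (by positivity : 0 ≤ 2 * Real.sqrt (L / μ) * K).trans_lt hsep
  -- an empty infimum is `0` in `ℝ`, so `hsep` forces `k ≠ 0`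
  have : Nonempty (Fin k) := by
    by_contra hk
    rw [not_nonempty_iff] at hk
    simp [hν] at hνpos
  have hf : StrongConvexOn univ μ f := strongConvexOn_univ_of_forall hsc
  have hmin₀ : IsMinOn f univ 0 := isMinOn_univ_iff.2 hmin
  have hw (i) : ν ≤ ‖w i‖ := hν ▸ ciInf_le (Finite.bddBelow_range _) i
  have hq (j) : ‖q j‖ ≤ K := hK ▸ le_ciSup (Finite.bddAbove_range fun j => ‖q j‖) j
  have hww (i j) (hij : i ≠ j) : Real.sqrt 2 * ω ≤ ‖w i - w j‖ := by
    calc Real.sqrt 2 * ω ≤ γ := by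
          rw [← le_div_iff₀' (by positivity), hω]; exact min_le_right _ _
      _ ≤ ‖w i - w j‖ := by
          rw [hγ]
          exact ciInf_le (Finite.bddBelow_range _)
            (⟨(i, j), hij⟩ : {p : Fin k × Fin k // p.1 ≠ p.2})
  have hω0 : 0 ≤ ω := by rw [hω]; exact le_min hνpos.le (by positivity)
  have hων : ω ≤ ν := by rw [hω]; exact min_le_left _ _
  exact hf.apply_sum_smul_add_sum_smul_le_iSup hμ hf0
    (fun y => by simpa [hf0] using hf.add_mul_norm_sub_sq_le_of_isMinOn hmin₀ trivial trivial)
    (fun y => by simpa [hf0] using hmin₀.le_add_mul_norm_sub_sq_of_lipschitz_gradient hgrad hlip y)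
    hw hww hω0 hων hq hK0 hsep (fun i => hx0 _) (fun j => hx0 _)
    (by simpa [Fin.sum_univ_add] using hx1) hxb

/-- bound on the maximum of `f(Yx)` over the truncated simplex, where
`Y = [W, Q]`, `ν(W) > 2√(L/μ)K(Q)`, and `0 ≤ δ ≤ 1/2`. -/
theorem stmt_3 (m k k' : ℕ) (hk : 0 < k) (μ L : ℝ) (hμ : 0 < μ)
    (w : Fin k → EuclideanSpace ℝ (Fin m)) (q : Fin k' → EuclideanSpace ℝ (Fin m))
    (f : EuclideanSpace ℝ (Fin m) → ℝ)
    (f' : EuclideanSpace ℝ (Fin m) → EuclideanSpace ℝ (Fin m))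
    (hf0 : f 0 = 0) (hnonneg : ∀ y, 0 ≤ f y) (hmin : ∀ y, f 0 ≤ f y)
    (hgrad : ∀ x, HasGradientAt f (f' x) x)
    (hlip : ∀ x y, ‖f' x - f' y‖ ≤ L * ‖x - y‖)
    (hsc : ∀ x y : EuclideanSpace ℝ (Fin m), ∀ δ : ℝ, 0 ≤ δ → δ ≤ 1 →
      f (δ • x + (1 - δ) • y) ≤ δ * f x + (1 - δ) * f y - μ / 2 * (δ * (1 - δ)) * ‖x - y‖ ^ 2)
    (ν γ ω K : ℝ)
    (hν : ν = ⨅ i : Fin k, ‖w i‖)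
    (hγ : γ = ⨅ p : {p : Fin k × Fin k // p.1 ≠ p.2}, ‖w p.1.1 - w p.1.2‖)
    (hω : ω = min ν (γ / Real.sqrt 2))
    (hK : K = ⨆ i : Fin k', ‖q i‖)
    (hsep : 2 * Real.sqrt (L / μ) * K < ν)
    (δ : ℝ) (hδ0 : 0 ≤ δ) (hδ1 : δ ≤ 1 / 2)
    (x : Fin (k + k') → ℝ) (hx0 : ∀ i, 0 ≤ x i) (hx1 : ∑ i, x i ≤ 1)
    (hxb : ∀ i : Fin k, x (Fin.castAdd k' i) ≤ 1 - δ) :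
    f (∑ i : Fin k, x (Fin.castAdd k' i) • w i + ∑ i : Fin k', x (Fin.natAdd k i) • q i)
      ≤ (⨆ i : Fin k, f (w i)) - 1 / 2 * μ * (1 - δ) * δ * ω ^ 2 :=
  stmt_3_general m k k' μ L hμ w q f f' hf0 hmin hgrad hlip hsc ν γ ω K hν hγ hω hK hsep δ x hx0 hx1
    hxb
end

section
/- Let W ∈ ℝ^{m×r} have rank r. Define K(W) = maxᵢ ‖wᵢ‖₂, ν(W) = minᵢ ‖wᵢ‖₂, γ(W) = min_{i≠j}‖wᵢ−w_j‖₂, ω(W) = min(ν(W), γ(W)/√2), and κ(W) = σ₁(W)/σ_r(W). Then 1 ≤ K(W)/ω(W) ≤ κ(W). In particular, if κ(W) = 1 then K(W) = ω(W). -/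
/-!
Each column of `W` is `W eᵢ` with `‖eᵢ‖ = 1`, and each difference of two columns is
`W (eᵢ - eⱼ)` with `‖eᵢ - eⱼ‖ = √2`. Since `σ_r(W) ‖x‖ ≤ ‖W x‖` for all `x` and
`‖W x‖ ≤ σ₁(W)` for unit `x`, this gives `σ_r ≤ ν`, `√2 σ_r ≤ γ` and `K ≤ σ₁`, i.e. the chain
`0 < σ_r ≤ ω ≤ ν ≤ K ≤ σ₁`, where `σ_r > 0` because `W` is injective. Both ratio bounds and
the equality case are read off this chain.
-/

/-- The `j`-th largest singular value of `A ∈ ℝ^{m×r}` via the Courant–Fischer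
max-min characterization. -/
noncomputable def sv {m r : ℕ} (A : Matrix (Fin m) (Fin r) ℝ) (j : ℕ) : ℝ :=
  ⨆ S : {S : Submodule ℝ (Fin r → ℝ) // Module.finrank ℝ S = j},
    ⨅ x : {x : Fin r → ℝ // x ∈ S.1 ∧ ∑ i, x i ^ 2 = 1},
      Real.sqrt (∑ a, A.mulVec x.1 a ^ 2)

open WithLp

lemma sqrt_sum_sq_eq_norm {ι : Type*} [Fintype ι] (x : ι → ℝ) :
    √(∑ i, x i ^ 2) = ‖toLp 2 x‖ := by
  simp [EuclideanSpace.norm_eq]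

lemma sum_sq_eq_one_iff_norm_eq_one {ι : Type*} [Fintype ι] (x : ι → ℝ) :
    ∑ i, x i ^ 2 = 1 ↔ ‖toLp 2 x‖ = 1 := by
  rw [← sqrt_sum_sq_eq_norm, Real.sqrt_eq_one]

lemma norm_toLp_single_sub_single {ι : Type*} [Fintype ι] [DecidableEq ι] {i j : ι}
    (hij : i ≠ j) : ‖toLp 2 (Pi.single i 1 - Pi.single j 1 : ι → ℝ)‖ = √2 := by
  rw [← sqrt_sum_sq_eq_norm]
  congr 1
  simp [sub_sq, Finset.sum_add_distrib, Finset.sum_sub_distrib, Pi.single_apply, hij.symm]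
  norm_num

lemma norm_toLp_single {ι : Type*} [Fintype ι] [DecidableEq ι] (i : ι) :
    ‖toLp 2 (Pi.single i 1 : ι → ℝ)‖ = 1 := by
  simp

lemma bddBelow_range_sqrt {ι : Type*} (f : ι → ℝ) : BddBelow (Set.range fun i => √(f i)) :=
  ⟨0, by rintro _ ⟨i, rfl⟩; exact Real.sqrt_nonneg _⟩

lemma ratio_bounds_of_le_chain {α : Type*} [Field α] [LinearOrder α] [IsStrictOrderedRing α]
    {s w k t : α} (hs : 0 < s) (hsw : s ≤ w) (hwk : w ≤ k) (hkt : k ≤ t) :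
    1 ≤ k / w ∧ k / w ≤ t / s ∧ (t / s = 1 → k = w) := by
  have hw : 0 < w := hs.trans_le hsw
  refine ⟨(one_le_div hw).mpr hwk, div_le_div₀ (hs.le.trans (hsw.trans (hwk.trans hkt))) hkt hs hsw,
    fun h => le_antisymm ?_ hwk⟩
  rw [div_eq_one_iff_eq hs.ne'] at h
  exact hkt.trans (h ▸ hsw)

namespace Matrix

lemma mulVec_injective_of_rank_eq_card {m n : Type*} [Fintype n] {W : Matrix m n ℝ}
    (h : W.rank = Fintype.card n) : Function.Injective W.mulVec := by
  have hker := W.mulVecLin.finrank_range_add_finrank_ker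
  rw [← Matrix.rank, h, Module.finrank_fintype_fun_eq_card, add_eq_left,
    Submodule.finrank_eq_zero] at hker
  exact LinearMap.ker_eq_bot.mp hker

variable {m n : Type*} [Fintype m] [Fintype n] [DecidableEq n] (W : Matrix m n ℝ)

lemma exists_norm_toLp_mulVec_le : ∃ C, ∀ x, ‖toLp 2 (W *ᵥ x)‖ ≤ C * ‖toLp 2 x‖ := by
  let L := LinearMap.toContinuousLinearMap (toLpLin 2 2 W)
  exact ⟨‖L‖, fun x => L.le_opNorm (toLp 2 x)⟩

lemma exists_pos_mul_norm_le_norm_toLp_mulVec (hW : Function.Injective W.mulVec) :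
    ∃ c > 0, ∀ x, c * ‖toLp 2 x‖ ≤ ‖toLp 2 (W *ᵥ x)‖ := by
  have hker : LinearMap.ker (toLpLin 2 2 W) = ⊥ := by
    rw [LinearMap.ker_eq_bot]
    intro x y h
    exact WithLp.ofLp_injective 2 (hW (by simpa using congrArg ofLp h))
  obtain ⟨K, -, hK⟩ := (toLpLin 2 2 W).exists_antilipschitzWith hker
  obtain ⟨c, hc, hle⟩ := antilipschitzWith_iff_exists_mul_le_norm.mp ⟨K, hK⟩
  exact ⟨c, hc, fun x => hle (toLp 2 x)⟩

lemma norm_toLp_mulVec_single (i : n) : ‖toLp 2 (W *ᵥ Pi.single i 1)‖ = √(∑ a, W a i ^ 2) := by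
  rw [mulVec_single_one, ← sqrt_sum_sq_eq_norm]
  rfl

lemma norm_toLp_mulVec_single_sub_single (i j : n) :
    ‖toLp 2 (W *ᵥ (Pi.single i 1 - Pi.single j 1))‖ = √(∑ a, (W a i - W a j) ^ 2) := by
  rw [mulVec_sub, mulVec_single_one, mulVec_single_one, ← sqrt_sum_sq_eq_norm]
  rfl

end Matrix

open Matrix

section SingularValues

variable {m n : ℕ} (W : Matrix (Fin m) (Fin n) ℝ)

lemma bddAbove_range_sv (j : ℕ) :
    BddAbove (Set.range fun S : {S : Submodule ℝ (Fin n → ℝ) // Module.finrank ℝ S = j} =>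
      ⨅ x : {x : Fin n → ℝ // x ∈ S.1 ∧ ∑ i, x i ^ 2 = 1}, √(∑ a, (W *ᵥ x.1) a ^ 2)) := by
  obtain ⟨C, hC⟩ := exists_norm_toLp_mulVec_le W
  refine ⟨max C 0, ?_⟩
  rintro _ ⟨S, rfl⟩
  rcases isEmpty_or_nonempty {x : Fin n → ℝ // x ∈ S.1 ∧ ∑ i, x i ^ 2 = 1} with _ | ⟨x, hxS, hx⟩
  · simp [iInf_of_isEmpty]
  · refine (ciInf_le (bddBelow_range_sqrt _) ⟨x, hxS, hx⟩).trans (le_max_of_le_left ?_)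
    simpa [sqrt_sum_sq_eq_norm, (sum_sq_eq_one_iff_norm_eq_one x).mp hx] using hC x

lemma sv_width_le_norm {x : Fin n → ℝ} (hx : ‖toLp 2 x‖ = 1) : sv W n ≤ ‖toLp 2 (W *ᵥ x)‖ := by
  have : Nonempty {S : Submodule ℝ (Fin n → ℝ) // Module.finrank ℝ S = n} := ⟨⟨⊤, by simp⟩⟩
  refine ciSup_le fun S => ?_
  have hxS : x ∈ S.1 := by
    rw [S.1.eq_top_of_finrank_eq (by simpa using S.2)]
    exact Submodule.mem_top
  rw [← sqrt_sum_sq_eq_norm]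
  have hx' : ∑ i, x i ^ 2 = 1 := (sum_sq_eq_one_iff_norm_eq_one x).mpr hx
  exact ciInf_le (f := fun y : {y : Fin n → ℝ // y ∈ S.1 ∧ ∑ i, y i ^ 2 = 1} =>
    √(∑ a, (W *ᵥ y.1) a ^ 2)) (bddBelow_range_sqrt _) ⟨x, hxS, hx'⟩

lemma sv_width_mul_norm_le (x : Fin n → ℝ) : sv W n * ‖toLp 2 x‖ ≤ ‖toLp 2 (W *ᵥ x)‖ := by
  rcases eq_or_ne x 0 with rfl | hx
  · simp
  have hpos : 0 < ‖toLp 2 x‖ := norm_pos_iff.mpr (by simpa using hx)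
  have hunit : ‖toLp 2 (‖toLp 2 x‖⁻¹ • x)‖ = 1 := by
    rw [WithLp.toLp_smul, norm_smul, norm_inv, norm_norm, inv_mul_cancel₀ hpos.ne']
  have := sv_width_le_norm W hunit
  rwa [mulVec_smul, WithLp.toLp_smul, norm_smul, norm_inv, norm_norm, inv_mul_eq_div,
    le_div_iff₀ hpos] at this

lemma sv_width_pos (hW : Function.Injective W.mulVec) (hn : 0 < n) : 0 < sv W n := by
  obtain ⟨c, hc, hle⟩ := exists_pos_mul_norm_le_norm_toLp_mulVec W hW
  let top : {S : Submodule ℝ (Fin n → ℝ) // Module.finrank ℝ S = n} := ⟨⊤, by simp⟩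
  have : Nonempty {x : Fin n → ℝ // x ∈ top.1 ∧ ∑ i, x i ^ 2 = 1} :=
    ⟨⟨Pi.single ⟨0, hn⟩ 1, Submodule.mem_top, by simp [Pi.single_apply]⟩⟩
  refine hc.trans_le (le_trans ?_ (le_ciSup (bddAbove_range_sv W n) top))
  refine le_ciInf fun ⟨x, _, hx⟩ => ?_
  rw [sum_sq_eq_one_iff_norm_eq_one] at hx
  simpa [sqrt_sum_sq_eq_norm, hx] using hle x

lemma norm_toLp_mulVec_le_sv_one {x : Fin n → ℝ} (hx : ‖toLp 2 x‖ = 1) :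
    ‖toLp 2 (W *ᵥ x)‖ ≤ sv W 1 := by
  have hx0 : x ≠ 0 := by rintro rfl; simp at hx
  let line : {S : Submodule ℝ (Fin n → ℝ) // Module.finrank ℝ S = 1} :=
    ⟨Submodule.span ℝ {x}, finrank_span_singleton hx0⟩
  have : Nonempty {y : Fin n → ℝ // y ∈ line.1 ∧ ∑ i, y i ^ 2 = 1} :=
    ⟨⟨x, Submodule.mem_span_singleton_self x, (sum_sq_eq_one_iff_norm_eq_one x).mpr hx⟩⟩
  refine le_trans ?_ (le_ciSup (bddAbove_range_sv W 1) line)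
  refine le_ciInf fun ⟨y, hyS, hy⟩ => ?_
  obtain ⟨c, rfl⟩ := Submodule.mem_span_singleton.mp hyS
  rw [sum_sq_eq_one_iff_norm_eq_one, WithLp.toLp_smul, norm_smul, hx, mul_one] at hy
  simp only [sqrt_sum_sq_eq_norm, mulVec_smul, WithLp.toLp_smul, norm_smul, hy, one_mul, le_refl]

lemma sv_width_le_col_norm (i : Fin n) : sv W n ≤ √(∑ a, W a i ^ 2) := by
  have h := sv_width_mul_norm_le W (Pi.single i 1)
  rwa [norm_toLp_mulVec_single, norm_toLp_single, mul_one] at h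

lemma sv_width_mul_sqrt_two_le {i j : Fin n} (hij : i ≠ j) :
    sv W n * √2 ≤ √(∑ a, (W a i - W a j) ^ 2) := by
  have h := sv_width_mul_norm_le W (Pi.single i 1 - Pi.single j 1)
  rwa [norm_toLp_single_sub_single hij, norm_toLp_mulVec_single_sub_single] at h

lemma col_norm_le_sv_one (i : Fin n) : √(∑ a, W a i ^ 2) ≤ sv W 1 := by
  rw [← norm_toLp_mulVec_single]
  exact norm_toLp_mulVec_le_sv_one W (norm_toLp_single i)

end SingularValues

/-- for a rank-`r` matrix `W ∈ ℝ^{m×r}`,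
`1 ≤ K(W)/ω(W) ≤ κ(W) = σ₁(W)/σ_r(W)`; in particular `κ(W) = 1` implies `K(W) = ω(W)`. -/
theorem stmt_10 (m r : ℕ) (hr : 2 ≤ r)
    (W : Matrix (Fin m) (Fin r) ℝ) (hrank : W.rank = r)
    (K ν γ ω : ℝ)
    (hK : K = ⨆ i : Fin r, Real.sqrt (∑ a, W a i ^ 2))
    (hν : ν = ⨅ i : Fin r, Real.sqrt (∑ a, W a i ^ 2))
    (hγ : γ = ⨅ p : {p : Fin r × Fin r // p.1 ≠ p.2},
      Real.sqrt (∑ a, (W a p.1.1 - W a p.1.2) ^ 2))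
    (hω : ω = min ν (γ / Real.sqrt 2)) :
    1 ≤ K / ω ∧ K / ω ≤ sv W 1 / sv W r ∧ (sv W 1 / sv W r = 1 → K = ω) := by
  let i₀ : Fin r := ⟨0, by omega⟩
  have : Nonempty (Fin r) := ⟨i₀⟩
  have : Nonempty {p : Fin r × Fin r // p.1 ≠ p.2} :=
    ⟨⟨(i₀, ⟨1, hr⟩), by simp [i₀, Fin.ext_iff]⟩⟩
  have hσν : sv W r ≤ ν := hν ▸ le_ciInf (sv_width_le_col_norm W)
  have hσγ : sv W r ≤ γ / √2 := by
    rw [le_div_iff₀ (by positivity), hγ]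
    exact le_ciInf fun p => sv_width_mul_sqrt_two_le W p.2
  have hνK : ν ≤ K := hν ▸ hK ▸ (ciInf_le (bddBelow_range_sqrt _) i₀).trans
    (le_ciSup (f := fun i : Fin r => √(∑ a, W a i ^ 2)) (Finite.bddAbove_range _) i₀)
  have hKσ : K ≤ sv W 1 := hK ▸ ciSup_le (col_norm_le_sv_one W)
  have hσpos : 0 < sv W r :=
    sv_width_pos W (mulVec_injective_of_rank_eq_card (by simpa using hrank)) (by omega)
  exact ratio_bounds_of_le_chain hσpos (hω ▸ le_min hσν hσγ)
    (hω ▸ (min_le_left _ _).trans hνK) hKσ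
end

section
/- Let W ∈ ℝ^{m×r} have columns of unit ℓ₁-norm, and let α be the minimum over i of the ℓ₁-distance from wᵢ to the convex hull of the other columns of W. Then σ_r(W) ≤ α. -/
/-- The smallest singular value of the matrix with columns `w i`. -/
noncomputable def sigmaMinE {m r : ℕ} (w : Fin r → EuclideanSpace ℝ (Fin m)) : ℝ :=
  ⨅ x : {x : Fin r → ℝ // ∑ i, x i ^ 2 = 1}, ‖∑ i, x.1 i • w i‖

/-!
For `v = eᵢ - θ` with `θᵢ = 0` we have `‖v‖₂ ≥ |vᵢ| = 1` and `W v = wᵢ - ∑ⱼ θⱼ wⱼ`, so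
`σ_r(W) ≤ σ_r(W) ‖v‖₂ ≤ ‖W v‖₂ ≤ ‖W v‖₁`. Taking `θ` in the convex hull of the other columns
gives `σ_r(W) ≤ α`.
-/

lemma EuclideanSpace.norm_le_sum_abs {ι : Type*} [Fintype ι] (u : EuclideanSpace ℝ ι) :
    ‖u‖ ≤ ∑ a, |u a| := by
  have hsq : ∑ a, ‖u a‖ ^ 2 ≤ (∑ a, ‖u a‖) ^ 2 :=
    Finset.sum_sq_le_sq_sum_of_nonneg fun _ _ => norm_nonneg _
  calc ‖u‖ = √(∑ a, ‖u a‖ ^ 2) := EuclideanSpace.norm_eq u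
    _ ≤ √((∑ a, ‖u a‖) ^ 2) := Real.sqrt_le_sqrt hsq
    _ = ∑ a, |u a| := Real.sqrt_sq (by positivity)

section sigmaMinE

variable {m r : ℕ} (w : Fin r → EuclideanSpace ℝ (Fin m))

lemma sigmaMinE_nonneg : 0 ≤ sigmaMinE w :=
  Real.iInf_nonneg fun _ => norm_nonneg _

lemma sigmaMinE_le_norm_sum_smul {x : Fin r → ℝ} (hx : ∑ i, x i ^ 2 = 1) :
    sigmaMinE w ≤ ‖∑ i, x i • w i‖ :=
  ciInf_le ⟨0, Set.forall_mem_range.2 fun _ => norm_nonneg _⟩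
    (⟨x, hx⟩ : {x : Fin r → ℝ // ∑ i, x i ^ 2 = 1})

lemma sigmaMinE_mul_le_norm_sum_smul (v : Fin r → ℝ) :
    sigmaMinE w * √(∑ i, v i ^ 2) ≤ ‖∑ i, v i • w i‖ := by
  set s := √(∑ i, v i ^ 2) with hs_def
  have hs_nonneg : 0 ≤ s := Real.sqrt_nonneg _
  rcases hs_nonneg.eq_or_lt with hs | hs
  · rw [← hs, mul_zero]
    exact norm_nonneg _
  have hunit : ∑ i, (s⁻¹ * v i) ^ 2 = 1 := by
    simp only [mul_pow, ← Finset.mul_sum, inv_pow]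
    have hpos : 0 < ∑ i, v i ^ 2 := Real.sqrt_pos.1 hs
    rw [hs_def, Real.sq_sqrt hpos.le, inv_mul_cancel₀ hpos.ne']
  have hscale : ∑ i, (s⁻¹ * v i) • w i = s⁻¹ • ∑ i, v i • w i := by
    simp only [Finset.smul_sum, smul_smul]
  have hbound := sigmaMinE_le_norm_sum_smul w hunit
  rw [hscale, norm_smul, Real.norm_of_nonneg (inv_nonneg.2 hs.le)] at hbound
  rwa [le_inv_mul_iff₀ hs, mul_comm] at hbound

lemma sigmaMinE_le_norm_sum_smul_of_one_le {v : Fin r → ℝ} (hv : 1 ≤ ∑ i, v i ^ 2) :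
    sigmaMinE w ≤ ‖∑ i, v i • w i‖ :=
  calc sigmaMinE w = sigmaMinE w * 1 := (mul_one _).symm
    _ ≤ sigmaMinE w * √(∑ i, v i ^ 2) := by
      gcongr
      · exact sigmaMinE_nonneg w
      · exact Real.one_le_sqrt.2 hv
    _ ≤ ‖∑ i, v i • w i‖ := sigmaMinE_mul_le_norm_sum_smul w v

lemma sigmaMinE_le_norm_sub_sum_smul {i : Fin r} {θ : Fin r → ℝ} (hθ : θ i = 0) :
    sigmaMinE w ≤ ‖w i - ∑ j, θ j • w j‖ := by
  set v : Fin r → ℝ := Pi.single i 1 - θ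
  have hvi : v i = 1 := by simp [v, hθ]
  have hv : 1 ≤ ∑ j, v j ^ 2 := by
    calc (1 : ℝ) = v i ^ 2 := by rw [hvi, one_pow]
      _ ≤ ∑ j, v j ^ 2 := Finset.single_le_sum (fun j _ => sq_nonneg (v j)) (Finset.mem_univ i)
  have hWv : ∑ j, v j • w j = w i - ∑ j, θ j • w j := by
    simp [v, sub_smul, Finset.sum_sub_distrib, Pi.single_apply, ite_smul]
  simpa only [hWv] using sigmaMinE_le_norm_sum_smul_of_one_le w hv

end sigmaMinE

theorem stmt_13_general (m r : ℕ) (hr : 2 ≤ r)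
    (w : Fin r → EuclideanSpace ℝ (Fin m))
    (α : ℝ)
    (hα : α = ⨅ i : Fin r,
      ⨅ θ : {θ : Fin r → ℝ // (∀ j, 0 ≤ θ j) ∧ θ i = 0 ∧ ∑ j, θ j = 1},
        ∑ a, |w i a - ∑ j, θ.1 j * w j a|) :
    sigmaMinE w ≤ α := by
  subst hα
  have : Nontrivial (Fin r) := Fin.nontrivial_iff_two_le.mpr hr
  refine le_ciInf fun i => ?_
  obtain ⟨j, hji⟩ := exists_ne i
  have : Nonempty {θ : Fin r → ℝ // (∀ k, 0 ≤ θ k) ∧ θ i = 0 ∧ ∑ k, θ k = 1} :=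
    ⟨⟨Pi.single j 1, fun k => by simp [Pi.single_apply]; positivity, by simp [hji.symm], by simp⟩⟩
  refine le_ciInf fun θ => ?_
  calc sigmaMinE w ≤ ‖w i - ∑ k, θ.1 k • w k‖ := sigmaMinE_le_norm_sub_sum_smul w θ.2.2.1
    _ ≤ ∑ a, |(w i - ∑ k, θ.1 k • w k) a| := EuclideanSpace.norm_le_sum_abs _
    _ = ∑ a, |w i a - ∑ k, θ.1 k * w k a| := by simp [WithLp.ofLp_sum, Finset.sum_apply]

/-- if the columns of `W` have unit `ℓ₁`-norm and `α` is the minimum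
`ℓ₁`-distance from a column of `W` to the convex hull of the other columns, then
`σ_r(W) ≤ α`. -/
theorem stmt_13 (m r : ℕ) (hr : 2 ≤ r)
    (w : Fin r → EuclideanSpace ℝ (Fin m))
    (hl1 : ∀ i, ∑ a, |w i a| = 1)
    (α : ℝ)
    (hα : α = ⨅ i : Fin r,
      ⨅ θ : {θ : Fin r → ℝ // (∀ j, 0 ≤ θ j) ∧ θ i = 0 ∧ ∑ j, θ j = 1},
        ∑ a, |w i a - ∑ j, θ.1 j * w j a|) :
    sigmaMinE w ≤ α :=
  stmt_13_general m r hr w α hα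
end

section
/- (Outlier detection, noiseless case) Let M = [W, T, WH'] = [W, T]F where [W, T] ∈ ℝ^{m×(r+t)} has rank r+t, F = [[I_r, 0, H'], [0, I_t, 0]] with columns of H' ∈ Δ^r, and every row of H' has at least one nonzero entry. Suppose an algorithm extracts the r+t columns of M corresponding to [W, T] (exactly, up to permutation), and then computes the unique G minimizing ‖M − [W,T]X‖_F² over X with columns in Δ^{r+t}. Then G = F (up to the permutation), every row of G corresponding to a column of W has ℓ₁-norm strictly greater than 1, and every row corresponding to a column of T has ℓ₁-norm exactly 1; hence selecting the r rows with largest ℓ₁-norm identifies exactly the columns of W. -/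
/-- outlier detection, noiseless case: `M = [W, T, WH'] = [W,T]F` with `[W,T]`
of full column rank, columns of `H'` in the unit simplex and every row of `H'` nonzero.  If
`G` minimizes `‖M − [W,T]X‖_F²` over matrices `X` with columns in the unit simplex, then
`G = F`, rows of `G` corresponding to columns of `W` have `ℓ₁`-norm `> 1`, rows corresponding
to outliers have `ℓ₁`-norm `= 1`, and the `r` largest-norm rows are exactly the `W`-rows. -/
theorem stmt_17 (m r t n' : ℕ) (hr : 0 < r) (ht : t ≤ m - r)
    (w : Fin r → EuclideanSpace ℝ (Fin m)) (T : Fin t → EuclideanSpace ℝ (Fin m))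
    (hB : LinearIndependent ℝ (Fin.append w T))
    (H' : Matrix (Fin r) (Fin n') ℝ)
    (hH0 : ∀ i j, 0 ≤ H' i j) (hH1 : ∀ j, ∑ i, H' i j ≤ 1)
    (hHrow : ∀ i : Fin r, ∃ j, H' i j ≠ 0)
    (F : Matrix (Fin (r + t)) (Fin (r + t + n')) ℝ)
    (hFI : ∀ j : Fin (r + t), ∀ a, F a (Fin.castAdd n' j) = if a = j then 1 else 0)
    (hFH : ∀ j : Fin n', ∀ a, F a (Fin.natAdd (r + t) j) =
      Fin.append (fun i : Fin r => H' i j) (fun _ : Fin t => (0 : ℝ)) a)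
    (Mc : Fin (r + t + n') → EuclideanSpace ℝ (Fin m))
    (hM : ∀ j, Mc j = ∑ a, F a j • Fin.append w T a)
    (G : Matrix (Fin (r + t)) (Fin (r + t + n')) ℝ)
    (hG0 : ∀ a j, 0 ≤ G a j) (hG1 : ∀ j, ∑ a, G a j ≤ 1)
    (hGopt : ∀ X : Matrix (Fin (r + t)) (Fin (r + t + n')) ℝ,
      (∀ a j, 0 ≤ X a j) → (∀ j, ∑ a, X a j ≤ 1) →
      ∑ j, ‖Mc j - ∑ a, G a j • Fin.append w T a‖ ^ 2 ≤
        ∑ j, ‖Mc j - ∑ a, X a j • Fin.append w T a‖ ^ 2) :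
    G = F ∧
    (∀ i : Fin r, 1 < ∑ j, |G (Fin.castAdd t i) j|) ∧
    (∀ i : Fin t, ∑ j, |G (Fin.natAdd r i) j| = 1) ∧
    (∀ i : Fin r, ∀ i' : Fin t,
      ∑ j, |G (Fin.natAdd r i') j| < ∑ j, |G (Fin.castAdd t i) j|) := by
  have hF0 : ∀ a j, 0 ≤ F a j := by
    intro a j
    refine Fin.addCases (fun j => ?_) (fun j => ?_) j
    · rw [hFI]; split <;> norm_num
    · rw [hFH]
      refine Fin.addCases (fun i => ?_) (fun i => ?_) a
      · rw [Fin.append_left]; exact hH0 i j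
      · rw [Fin.append_right]
  have hF1 : ∀ j, ∑ a, F a j ≤ 1 := by
    intro j
    refine Fin.addCases (fun j => ?_) (fun j => ?_) j
    · simp [hFI]
    · simp_rw [hFH]
      rw [Fin.sum_univ_add]
      simp only [Fin.append_left, Fin.append_right]
      simpa using hH1 j
  have hMc : ∀ j, Mc j - ∑ a, F a j • Fin.append w T a = 0 := by
    intro j; rw [hM j]; simp
  have hopt := hGopt F hF0 hF1
  have hRHS : ∑ j, ‖Mc j - ∑ a, F a j • Fin.append w T a‖ ^ 2 = 0 := by
    apply Finset.sum_eq_zero; intro j _; rw [hMc j]; simp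
  rw [hRHS] at hopt
  have hterm : ∀ j, Mc j = ∑ a, G a j • Fin.append w T a := by
    intro j
    have hle : ∑ j, ‖Mc j - ∑ a, G a j • Fin.append w T a‖ ^ 2 = 0 :=
      le_antisymm hopt (Finset.sum_nonneg fun j _ => by positivity)
    have h0 := (Finset.sum_eq_zero_iff_of_nonneg (fun j _ => by positivity)).mp hle j
      (Finset.mem_univ j)
    have hnorm : ‖Mc j - ∑ a, G a j • Fin.append w T a‖ = 0 := by
      nlinarith [norm_nonneg (Mc j - ∑ a, G a j • Fin.append w T a)]
    exact sub_eq_zero.mp (norm_eq_zero.mp hnorm)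
  have hGF : G = F := by
    funext a j
    have h0 : ∑ b, (G b j - F b j) • Fin.append w T b = 0 := by
      simp_rw [sub_smul]
      rw [Finset.sum_sub_distrib, ← hterm j]
      have : ∑ b, F b j • Fin.append w T b = Mc j := by
        exact (sub_eq_zero.mp (hMc j)).symm
      rw [this]; simp
    have := Fintype.linearIndependent_iff.mp hB (fun b => G b j - F b j) h0 a
    linarith
  have hrowW : ∀ i : Fin r, 1 < ∑ j, |F (Fin.castAdd t i) j| := by
    intro i
    rw [Fin.sum_univ_add]
    have h1 : ∑ j : Fin (r + t), |F (Fin.castAdd t i) (Fin.castAdd n' j)| = 1 := by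
      simp [hFI, apply_ite abs]
    have h2 : ∑ j : Fin n', |F (Fin.castAdd t i) (Fin.natAdd (r + t) j)| = ∑ j, H' i j := by
      refine Finset.sum_congr rfl fun j _ => ?_
      rw [hFH, Fin.append_left, abs_of_nonneg (hH0 i j)]
    rw [h1, h2]
    obtain ⟨j0, hj0⟩ := hHrow i
    have hpos : 0 < ∑ j, H' i j :=
      Finset.sum_pos' (fun j _ => hH0 i j)
        ⟨j0, Finset.mem_univ j0, lt_of_le_of_ne (hH0 i j0) (Ne.symm hj0)⟩
    linarith
  have hrowT : ∀ i : Fin t, ∑ j, |F (Fin.natAdd r i) j| = 1 := by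
    intro i
    rw [Fin.sum_univ_add]
    have h1 : ∑ j : Fin (r + t), |F (Fin.natAdd r i) (Fin.castAdd n' j)| = 1 := by
      simp [hFI, apply_ite abs]
    have h2 : ∑ j : Fin n', |F (Fin.natAdd r i) (Fin.natAdd (r + t) j)| = 0 := by
      refine Finset.sum_eq_zero fun j _ => ?_
      rw [hFH, Fin.append_right, abs_zero]
    rw [h1, h2]; ring
  refine ⟨hGF, ?_, ?_, ?_⟩
  · intro i; rw [hGF]; exact hrowW i
  · intro i; rw [hGF]; exact hrowT i
  · intro i i'; rw [hGF, hrowT i']; exact hrowW i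
end

section
/- Let M' = M + N where M satisfies the separability assumption with W ∈ ℝ^{m×r}. If every column n_i of N satisfies ‖n_i‖₂ ≤ ε and ε ≤ σ_r(W)/(2√(r−1))·(1 + 80·K(W)²L/(σ_r(W)²μ))⁻¹, then with ε̄ = ε(1 + 80·K(W)²L/(σ_r²(W)μ)), one has σ_r(W) − √(r−1)·ε̄ ≥ (1/2)σ_r(W); consequently, after any k ≤ r−1 projection steps of the recursive algorithm in which each extracted direction is within ε̄ of a column of W, the remaining projected columns W⁽ᵏ⁾ of W satisfy ω(W⁽ᵏ⁾) ≥ (1/2)σ_r(W) and K(W⁽ᵏ⁾)²/ω(W⁽ᵏ⁾)² ≤ 4K(W)²/σ_r(W)². -/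
/-- `ω(W) = min(minᵢ ‖wᵢ‖₂, min_{i≠j} ‖wᵢ − w_j‖₂ / √2)`. -/
noncomputable def omegaE {m r : ℕ} (w : Fin r → EuclideanSpace ℝ (Fin m)) : ℝ :=
  min (⨅ i : Fin r, ‖w i‖)
    ((⨅ p : {p : Fin r × Fin r // p.1 ≠ p.2}, ‖w p.1.1 - w p.1.2‖) / Real.sqrt 2)

/-- `P = Π_i (I − uᵢuᵢᵀ/‖uᵢ‖²)` applied to a vector. -/
noncomputable def projComp {m k : ℕ} (u : Fin k → EuclideanSpace ℝ (Fin m))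
    (v : EuclideanSpace ℝ (Fin m)) : EuclideanSpace ℝ (Fin m) :=
  (List.ofFn fun i : Fin k => fun x : EuclideanSpace ℝ (Fin m) =>
    x - ((inner ℝ (u i) x : ℝ) / ‖u i‖ ^ 2) • u i).foldr (fun g x => g x) v

open Finset Module

lemma norm_sub_inner_div_smul_le {E : Type*} [NormedAddCommGroup E] [InnerProductSpace ℝ E]
    (u x : E) : ‖x - (inner ℝ u x / ‖u‖ ^ 2) • u‖ ≤ ‖x‖ := by
  have h := (ℝ ∙ u)ᗮ.norm_starProjection_apply_le x
  rwa [Submodule.starProjection_orthogonal, sub_apply,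
    Submodule.starProjection_singleton] at h

namespace List

lemma foldr_apply_sub_mem {R E : Type*} [Ring R] [AddCommGroup E] [Module R E]
    (S : Submodule R E) (l : List (E → E))
    (h : ∀ g ∈ l, ∀ x, x - g x ∈ S) (v : E) :
    v - l.foldr (fun g x => g x) v ∈ S := by
  induction l with
  | nil => simp
  | cons g l ih =>
    simpa using S.add_mem (ih fun g' hg' => h g' (mem_cons_of_mem _ hg'))
      (h g List.mem_cons_self (l.foldr (fun g x => g x) v))

lemma norm_foldr_apply_le {E : Type*} [Norm E] (l : List (E → E))
    (h : ∀ g ∈ l, ∀ x, ‖g x‖ ≤ ‖x‖) (v : E) : ‖l.foldr (fun g x => g x) v‖ ≤ ‖v‖ := by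
  induction l with
  | nil => simp
  | cons g l ih =>
    exact (h g mem_cons_self _).trans (ih fun g' hg' => h g' (mem_cons_of_mem _ hg'))

end List

section ProjCompEuclidean

variable {m k : ℕ} (u : Fin k → EuclideanSpace ℝ (Fin m)) (v : EuclideanSpace ℝ (Fin m))

lemma sub_projComp_mem_span : v - projComp u v ∈ Submodule.span ℝ (Set.range u) := by
  refine List.foldr_apply_sub_mem _ _ ?_ v
  simp only [List.mem_ofFn, forall_exists_index, forall_apply_eq_imp_iff, sub_sub_cancel]
  exact fun i x => Submodule.smul_mem _ _ (Submodule.subset_span (Set.mem_range_self i))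

lemma norm_projComp_le : ‖projComp u v‖ ≤ ‖v‖ := by
  refine List.norm_foldr_apply_le _ ?_ v
  simp only [List.mem_ofFn, forall_exists_index, forall_apply_eq_imp_iff]
  exact fun i => norm_sub_inner_div_smul_le (u i)

end ProjCompEuclidean

section SigmaMin

variable {m r : ℕ}

lemma sigmaMinE_mul_sqrt_le (w : Fin r → EuclideanSpace ℝ (Fin m)) (x : Fin r → ℝ) :
    sigmaMinE w * √(∑ i, x i ^ 2) ≤ ‖∑ i, x i • w i‖ := by
  rcases (Real.sqrt_nonneg (∑ i, x i ^ 2)).eq_or_lt with h0 | hn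
  · rw [← h0, mul_zero]; exact norm_nonneg _
  have hunit : ∑ i, ((√(∑ i, x i ^ 2))⁻¹ * x i) ^ 2 = 1 := by
    simp_rw [mul_pow, ← mul_sum, inv_pow,
      Real.sq_sqrt (sum_nonneg fun i _ => sq_nonneg (x i))]
    exact inv_mul_cancel₀ (Real.sqrt_pos.1 hn).ne'
  have hbdd : BddBelow (Set.range fun y : {y : Fin r → ℝ // ∑ i, y i ^ 2 = 1} =>
      ‖∑ i, y.1 i • w i‖) := ⟨0, by rintro _ ⟨y, rfl⟩; exact norm_nonneg _⟩
  have h := ciInf_le hbdd ⟨_, hunit⟩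
  simp only [mul_smul, ← smul_sum, norm_smul, Real.norm_eq_abs, abs_inv, abs_of_pos hn] at h
  rwa [sigmaMinE, ← le_div_iff₀ hn, div_eq_inv_mul]

lemma le_sigmaMinE (hr : 0 < r) (w : Fin r → EuclideanSpace ℝ (Fin m)) {δ : ℝ}
    (h : ∀ x : Fin r → ℝ, ∑ i, x i ^ 2 = 1 → δ ≤ ‖∑ i, x i • w i‖) : δ ≤ sigmaMinE w := by
  have : Nonempty {x : Fin r → ℝ // ∑ i, x i ^ 2 = 1} :=
    ⟨⟨Pi.single ⟨0, hr⟩ 1, by simp [sq, Pi.single_apply]⟩⟩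
  exact le_ciInf fun x => h x.1 x.2

lemma sigmaMinE_pos (hr : 0 < r) {w : Fin r → EuclideanSpace ℝ (Fin m)}
    (hw : LinearIndependent ℝ w) : 0 < sigmaMinE w := by
  let f : EuclideanSpace ℝ (Fin r) →ₗ[ℝ] EuclideanSpace ℝ (Fin m) :=
    (Fintype.linearCombination ℝ w).comp (WithLp.linearEquiv 2 ℝ (Fin r → ℝ)).toLinearMap
  obtain ⟨K, hK, hf⟩ := f.injective_iff_antilipschitz.1
    (hw.fintypeLinearCombination_injective.comp
      (WithLp.linearEquiv 2 ℝ (Fin r → ℝ)).injective)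
  refine lt_of_lt_of_le (inv_pos.2 (NNReal.coe_pos.2 hK)) (le_sigmaMinE hr w fun x hx => ?_)
  have hfx : f (WithLp.toLp 2 x) = ∑ i, x i • w i := by
    simp [f, Fintype.linearCombination_apply]
  have hnx : ‖WithLp.toLp 2 x‖ = 1 := by simp [EuclideanSpace.norm_eq, hx]
  have h := ZeroHomClass.bound_of_antilipschitz f hf (WithLp.toLp 2 x)
  rw [hfx, hnx] at h
  rwa [inv_le_iff_one_le_mul₀' (NNReal.coe_pos.2 hK)]

lemma sigmaMinE_le_omegaE (hr : 2 ≤ r) (w : Fin r → EuclideanSpace ℝ (Fin m)) :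
    sigmaMinE w ≤ omegaE w := by
  have : Nonempty (Fin r) := ⟨⟨0, by omega⟩⟩
  have : Nonempty {p : Fin r × Fin r // p.1 ≠ p.2} :=
    ⟨⟨(⟨0, by omega⟩, ⟨1, by omega⟩), by simp [Fin.ext_iff]⟩⟩
  refine le_min (le_ciInf fun i => ?_) ((le_div_iff₀ (by positivity)).2 (le_ciInf fun p => ?_))
  · simpa [sq, Pi.single_apply] using sigmaMinE_mul_sqrt_le w (Pi.single i 1)
  · obtain ⟨⟨i, j⟩, hij : i ≠ j⟩ := p
    have h := sigmaMinE_mul_sqrt_le w (Pi.single i 1 - Pi.single j 1)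
    simpa [sub_sq, sum_add_distrib, sum_sub_distrib, sub_smul, Pi.single_apply, hij.symm,
      one_add_one_eq_two] using h

end SigmaMin

lemma le_sqrt_sum_norm_sq_of_sub_mem {E ι : Type*} [NormedAddCommGroup E] [NormedSpace ℝ E]
    [Fintype ι] {σ : ℝ} {v η : ι → E}
    (S : Submodule ℝ E) [FiniteDimensional ℝ S] (hS : finrank ℝ S < Fintype.card ι)
    (hσ : ∀ x : ι → ℝ, σ * √(∑ i, x i ^ 2) ≤ ‖∑ i, x i • v i‖) (hη : ∀ i, v i - η i ∈ S) :
    σ ≤ √(∑ i, ‖η i‖ ^ 2) := by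
  obtain ⟨x, hx, i, hi⟩ := Fintype.not_linearIndependent_iff.1
    fun h : LinearIndependent ℝ fun i => (⟨v i - η i, hη i⟩ : S) =>
      hS.not_ge h.fintype_card_le_finrank
  have hrel : ∑ i, x i • v i = ∑ i, x i • η i := by
    rw [← sub_eq_zero, ← sum_sub_distrib]
    simpa [smul_sub] using congrArg Subtype.val hx
  have hx : 0 < √(∑ i, x i ^ 2) :=
    Real.sqrt_pos.2 (lt_of_lt_of_le (by positivity)
      (single_le_sum (fun j _ => sq_nonneg (x j)) (mem_univ i)))
  refine le_of_mul_le_mul_right ?_ hx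
  calc σ * √(∑ i, x i ^ 2) ≤ ‖∑ i, x i • η i‖ := hrel ▸ hσ x
    _ ≤ ∑ i, |x i| * ‖η i‖ := by
      simpa only [norm_smul, Real.norm_eq_abs] using norm_sum_le univ fun i => x i • η i
    _ ≤ √(∑ i, |x i| ^ 2) * √(∑ i, ‖η i‖ ^ 2) := Real.sum_mul_le_sqrt_mul_sqrt _ _ _
    _ = √(∑ i, ‖η i‖ ^ 2) * √(∑ i, x i ^ 2) := by simp only [sq_abs, mul_comm]

lemma sigmaMinE_append_mul_sqrt_le_cons {m r₁ k : ℕ} (w₁ : Fin r₁ → EuclideanSpace ℝ (Fin m))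
    (w₂ : Fin k → EuclideanSpace ℝ (Fin m)) {y : Fin r₁ → ℝ} (hy : ∑ j, y j ^ 2 = 1)
    (x : Fin (k + 1) → ℝ) :
    sigmaMinE (Fin.append w₁ w₂) * √(∑ i, x i ^ 2) ≤
      ‖∑ i, x i • (Fin.cons (∑ j, y j • w₁ j) w₂ : Fin (k + 1) → _) i‖ := by
  have h := sigmaMinE_mul_sqrt_le (Fin.append w₁ w₂)
    (Fin.append (fun j => x 0 * y j) fun j => x j.succ)
  simp only [Fin.sum_univ_add, Fin.append_left, Fin.append_right, mul_pow, ← mul_sum, hy,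
    mul_one, mul_smul, ← smul_sum] at h
  simpa only [Fin.sum_univ_succ, Fin.cons_zero, Fin.cons_succ] using h

lemma sigmaMinE_append_sub_le_sigmaMinE_projComp {m r₁ k : ℕ} (hr₁ : 0 < r₁)
    (w₁ : Fin r₁ → EuclideanSpace ℝ (Fin m)) (w₂ : Fin k → EuclideanSpace ℝ (Fin m))
    (u : Fin k → EuclideanSpace ℝ (Fin m)) {εb : ℝ} (hεb : 0 ≤ εb)
    (hproj : ∀ j, ‖projComp u (w₂ j)‖ ≤ εb) :
    sigmaMinE (Fin.append w₁ w₂) - √k * εb ≤ sigmaMinE fun i => projComp u (w₁ i) := by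
  refine le_sigmaMinE hr₁ _ fun y hy => ?_
  have hS : finrank ℝ (Submodule.span ℝ (Set.range u)) < Fintype.card (Fin (k + 1)) := by
    have := finrank_range_le_card (R := ℝ) u
    simp only [Set.finrank, Fintype.card_fin] at this ⊢
    omega
  set S := Submodule.span ℝ (Set.range u)
  have hcol : ∑ j, y j • w₁ j - ∑ j, y j • projComp u (w₁ j) ∈ S := by
    simp_rw [← sum_sub_distrib, ← smul_sub]
    exact sum_mem fun j _ => S.smul_mem _ (sub_projComp_mem_span u (w₁ j))
  have h := le_sqrt_sum_norm_sq_of_sub_mem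
    (η := Fin.cons (∑ j, y j • projComp u (w₁ j)) fun j => projComp u (w₂ j)) S hS
    (sigmaMinE_append_mul_sqrt_le_cons w₁ w₂ hy)
    (Fin.cases hcol fun j => sub_projComp_mem_span u (w₂ j))
  simp only [Fin.sum_univ_succ, Fin.cons_zero, Fin.cons_succ] at h
  have hsum : ∑ j, ‖projComp u (w₂ j)‖ ^ 2 ≤ (√k * εb) ^ 2 := by
    rw [mul_pow, Real.sq_sqrt k.cast_nonneg]
    exact (sum_le_sum fun j _ => pow_le_pow_left₀ (norm_nonneg _) (hproj j) 2).trans_eq (by simp)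
  have hroot : √(‖∑ j, y j • projComp u (w₁ j)‖ ^ 2 + (√k * εb) ^ 2) ≤
      ‖∑ j, y j • projComp u (w₁ j)‖ + √k * εb := by
    have := mul_nonneg (norm_nonneg (∑ j, y j • projComp u (w₁ j)))
      (mul_nonneg (Real.sqrt_nonneg k) hεb)
    exact (Real.sqrt_le_left (by positivity)).2 (by nlinarith)
  linarith [h.trans ((Real.sqrt_le_sqrt (by gcongr)).trans hroot)]

lemma iSup_norm_projComp_le_iSup_norm_append {m r₁ k : ℕ}
    (w₁ : Fin r₁ → EuclideanSpace ℝ (Fin m)) (w₂ : Fin k → EuclideanSpace ℝ (Fin m))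
    (u : Fin k → EuclideanSpace ℝ (Fin m)) :
    ⨆ i, ‖projComp u (w₁ i)‖ ≤ ⨆ i, ‖Fin.append w₁ w₂ i‖ :=
  Real.iSup_le (fun i => (norm_projComp_le u (w₁ i)).trans <| by
      simpa using le_ciSup (Set.finite_range fun i => ‖Fin.append w₁ w₂ i‖).bddAbove
        (Fin.castAdd k i))
    (Real.iSup_nonneg fun _ => norm_nonneg _)

lemma nonneg_and_mul_le_of_le_mul_inv {ε B c : ℝ} (hε : 0 ≤ ε) (hB : 0 ≤ B) (h : ε ≤ B * c⁻¹) :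
    0 ≤ ε * c ∧ ε * c ≤ B := by
  rcases le_or_gt c 0 with hc | hc
  · obtain rfl : ε = 0 :=
      le_antisymm (h.trans (mul_nonpos_of_nonneg_of_nonpos hB (inv_nonpos.2 hc))) hε
    simpa using hB
  · exact ⟨by positivity, by rwa [← div_eq_mul_inv, le_div_iff₀ hc] at h⟩

theorem stmt_19_general (m r₁ k : ℕ) (hr₁ : 2 ≤ r₁)
    (μ L ε : ℝ) (hε0 : 0 ≤ ε)
    (w₁ : Fin r₁ → EuclideanSpace ℝ (Fin m)) (w₂ : Fin k → EuclideanSpace ℝ (Fin m))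
    (hW : LinearIndependent ℝ (Fin.append w₁ w₂))
    (KW σr εb : ℝ)
    (hKW : KW = ⨆ i : Fin (r₁ + k), ‖Fin.append w₁ w₂ i‖)
    (hσ : σr = sigmaMinE (Fin.append w₁ w₂))
    (hεbdef : εb = ε * (1 + 80 * (KW ^ 2 / σr ^ 2) * (L / μ)))
    (hε : ε ≤ σr / (2 * Real.sqrt ((r₁ + k : ℝ) - 1)) *
      (1 + 80 * (KW ^ 2 / σr ^ 2) * (L / μ))⁻¹)
    (u : Fin k → EuclideanSpace ℝ (Fin m))
    (hproj : ∀ i : Fin k, ‖projComp u (w₂ i)‖ ≤ εb) :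
    σr / 2 ≤ σr - Real.sqrt ((r₁ + k : ℝ) - 1) * εb ∧
    σr / 2 ≤ omegaE (fun i => projComp u (w₁ i)) ∧
    (⨆ i : Fin r₁, ‖projComp u (w₁ i)‖) ^ 2 / omegaE (fun i => projComp u (w₁ i)) ^ 2 ≤
      4 * KW ^ 2 / σr ^ 2 := by
  have hσpos : 0 < σr := hσ ▸ sigmaMinE_pos (by omega) hW
  have hr : (2 : ℝ) ≤ r₁ := by exact_mod_cast hr₁
  have hsqrt : 0 < √((r₁ + k : ℝ) - 1) :=
    Real.sqrt_pos.2 (by linarith [(k.cast_nonneg : (0 : ℝ) ≤ k)])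
  obtain ⟨hεb0, hεb⟩ := hεbdef ▸ nonneg_and_mul_le_of_le_mul_inv hε0 (by positivity) hε
  have hfirst : σr / 2 ≤ σr - √((r₁ + k : ℝ) - 1) * εb := by
    rw [le_div_iff₀ (by positivity)] at hεb
    linarith
  have hk : √k * εb ≤ √((r₁ + k : ℝ) - 1) * εb := by
    gcongr
    linarith
  have hω : σr / 2 ≤ omegaE fun i => projComp u (w₁ i) := calc
    σr / 2 ≤ σr - √k * εb := by linarith
    _ ≤ sigmaMinE fun i => projComp u (w₁ i) :=
      hσ ▸ sigmaMinE_append_sub_le_sigmaMinE_projComp (by omega) w₁ w₂ u hεb0 hproj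
    _ ≤ omegaE fun i => projComp u (w₁ i) := sigmaMinE_le_omegaE hr₁ _
  refine ⟨hfirst, hω, ?_⟩
  have hK := hKW ▸ iSup_norm_projComp_le_iSup_norm_append w₁ w₂ u
  calc (⨆ i, ‖projComp u (w₁ i)‖) ^ 2 / omegaE (fun i => projComp u (w₁ i)) ^ 2
      ≤ KW ^ 2 / (σr / 2) ^ 2 := by
        gcongr
        exact Real.iSup_nonneg fun _ => norm_nonneg _
    _ = 4 * KW ^ 2 / σr ^ 2 := by ring

/-- with `ε̄ = ε(1 + 80K(W)²L/(σ_r(W)²μ))` and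
`ε ≤ σ_r(W)/(2√(r−1))·(1 + 80K(W)²L/(σ_r(W)²μ))⁻¹`, we have
`σ_r(W) − √(r−1)·ε̄ ≥ σ_r(W)/2`; consequently, after `k ≤ r−1` projection steps in which the
projected extracted columns `w₂` have norm at most `ε̄`, the remaining projected columns
`W⁽ᵏ⁾ = P w₁` satisfy `ω(W⁽ᵏ⁾) ≥ σ_r(W)/2` and `K(W⁽ᵏ⁾)²/ω(W⁽ᵏ⁾)² ≤ 4K(W)²/σ_r(W)²`. -/
theorem stmt_19 (m r₁ k : ℕ) (hr₁ : 2 ≤ r₁) (hk : k ≤ r₁ + k - 1)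
    (μ L ε : ℝ) (hμ : 0 < μ) (hμL : μ ≤ L) (hε0 : 0 ≤ ε)
    (w₁ : Fin r₁ → EuclideanSpace ℝ (Fin m)) (w₂ : Fin k → EuclideanSpace ℝ (Fin m))
    (hW : LinearIndependent ℝ (Fin.append w₁ w₂))
    (KW σr εb : ℝ)
    (hKW : KW = ⨆ i : Fin (r₁ + k), ‖Fin.append w₁ w₂ i‖)
    (hσ : σr = sigmaMinE (Fin.append w₁ w₂))
    (hεbdef : εb = ε * (1 + 80 * (KW ^ 2 / σr ^ 2) * (L / μ)))
    (hε : ε ≤ σr / (2 * Real.sqrt ((r₁ + k : ℝ) - 1)) *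
      (1 + 80 * (KW ^ 2 / σr ^ 2) * (L / μ))⁻¹)
    (u : Fin k → EuclideanSpace ℝ (Fin m)) (hu : ∀ i, u i ≠ 0)
    (hproj : ∀ i : Fin k, ‖projComp u (w₂ i)‖ ≤ εb) :
    σr / 2 ≤ σr - Real.sqrt ((r₁ + k : ℝ) - 1) * εb ∧
    σr / 2 ≤ omegaE (fun i => projComp u (w₁ i)) ∧
    (⨆ i : Fin r₁, ‖projComp u (w₁ i)‖) ^ 2 / omegaE (fun i => projComp u (w₁ i)) ^ 2 ≤
      4 * KW ^ 2 / σr ^ 2 :=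
  stmt_19_general m r₁ k hr₁ μ L ε hε0 w₁ w₂ hW KW σr εb hKW hσ hεbdef hε u hproj
end
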